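/- arXiv:math/9403210 — 6 statements merged into one kernel-verified Lean document; each statement's English description precedes it below -/
import Mathlib

section
/- If a real Banach space X has property (𝒦), then for every real Banach space Y every compact operator u : Y → X admits a compact factorization through some quotient Q of X**: there are a Banach space Q, a bounded linear surjection from X** onto Q, and compact operators v : Q → X and w : Y → Q such that u = v ∘ w. -/
set_option maxSynthPendingDepth 3

open Filter Topology Metric NormedSpace Function

/-- `u` is a finite-rank operator: its range is finite-dimensional. -/
def FinRankOp {X Y : Type*} [NormedAddCommGroup X] [NormedSpace ℝ X]
    [NormedAddCommGroup Y] [NormedSpace ℝ Y] (u : X →L[ℝ] Y) : Prop :=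
  FiniteDimensional ℝ (LinearMap.range (u : X →ₗ[ℝ] Y))

/-- `u` is approximable: a limit in operator norm of finite-rank operators. -/
def ApproxOp {X Y : Type*} [NormedAddCommGroup X] [NormedSpace ℝ X]
    [NormedAddCommGroup Y] [NormedSpace ℝ Y] (u : X →L[ℝ] Y) : Prop :=
  u ∈ closure {f : X →L[ℝ] Y | FinRankOp f}

/-- `u` is a compact operator: it maps the closed unit ball to a relatively compact set. -/
def CompactOp {X Y : Type*} [NormedAddCommGroup X] [NormedSpace ℝ X]
    [NormedAddCommGroup Y] [NormedSpace ℝ Y] (u : X →L[ℝ] Y) : Prop :=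
  IsCompact (closure (u '' Metric.closedBall 0 1))

/-- Property (𝒦): every compact subset is contained in the closure of the image of the
closed unit ball under some compact operator `X → X`. -/
def PropertyK (X : Type*) [NormedAddCommGroup X] [NormedSpace ℝ X] : Prop :=
  ∀ K : Set X, IsCompact K →
    ∃ v : X →L[ℝ] X, CompactOp v ∧ K ⊆ closure (v '' Metric.closedBall 0 1)

/-- Property (F̄): every compact subset is contained in the closure of the image of the
closed unit ball under some approximable operator `X → X`. -/
def PropertyF (X : Type*) [NormedAddCommGroup X] [NormedSpace ℝ X] : Prop :=
  ∀ K : Set X, IsCompact K →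
    ∃ v : X →L[ℝ] X, ApproxOp v ∧ K ⊆ closure (v '' Metric.closedBall 0 1)


/-!
Grothendieck's lemma writes every point of the compact set `closure (u B_Y)` as `∑ 2⁻ⁿ θₙ` with
`θₙ` taken from finite sets `Fₙ` whose union is a null family, hence relatively compact.
Property (𝒦) puts that union inside `closure (v₀ B_X)` for a compact `v₀ : X → X`. Compact
operators are weakly compact, so `v₀**` takes values in `X` and maps `B_{X**}` onto
`closure (v₀ B_X)`. Lifting every `θₙ` to `B_{X**}` and passing to `Q = X** ⧸ ker v₀**`, the
induced injective operator `v : Q → X` is compact, and so is `w = v⁻¹ ∘ u`: `w (B_Y)` lies in the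
compact set of sums `∑ 2⁻ⁿ ξₙ` with `ξₙ` in finite subsets of `B_Q`.
-/

open scoped Pointwise

section NormedGroup

variable {X : Type*} [NormedAddCommGroup X]

theorem isCompact_insert_zero_iUnion {F : ℕ → Set X} (hF : ∀ n, (F n).Finite) {r : ℕ → ℝ}
    (hr : Tendsto r atTop (𝓝 0)) (hFr : ∀ n, F n ⊆ closedBall 0 (r n)) :
    IsCompact (insert 0 (⋃ n, F n)) := by
  have (n : ℕ) : Finite (F n) := (hF n).to_subtype
  have hfst : Tendsto (Sigma.fst : (Σ n, F n) → ℕ) cofinite atTop := by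
    rw [← Nat.cofinite_eq_atTop]
    refine Tendsto.cofinite_of_finite_preimage_singleton fun n => ?_
    rw [← Set.range_sigmaMk]
    exact Set.finite_range _
  have hsnd : Tendsto (fun i : Σ n, F n => (i.2 : X)) cofinite (𝓝 0) :=
    squeeze_zero_norm (fun i => mem_closedBall_zero_iff.mp (hFr i.1 i.2.2)) (hr.comp hfst)
  convert hsnd.isCompact_insert_range_of_cofinite
  ext x
  simp

theorem TotallyBounded.exists_finite_hasSum {K : Set X} (hK : TotallyBounded K) :
    ∃ (C : ℝ) (D : ℕ → Set X), (∀ n, (D n).Finite) ∧ (∀ n, D n ⊆ closedBall 0 (C * 4⁻¹ ^ n)) ∧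
      ∀ a ∈ K, ∃ d : ℕ → X, (∀ n, d n ∈ D n) ∧ HasSum d a := by
  obtain ⟨R, hR, hKR⟩ := hK.isBounded.subset_closedBall_lt 0 0
  set ε : ℕ → ℝ := fun n => R * 4⁻¹ ^ n
  have hε : ∀ n, 0 < ε n := fun n => by positivity
  choose E hEfin hEcov using fun n => Metric.totallyBounded_iff.mp hK (ε n) (hε n)
  refine ⟨2 * R, fun n => (E (n + 1) - insert 0 (E n)) ∩ closedBall 0 (2 * R * 4⁻¹ ^ n),
    fun n => ((hEfin (n + 1)).sub ((hEfin n).insert 0)).inter_of_left _,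
    fun n => Set.inter_subset_right, fun a ha => ?_⟩
  have hnear : ∀ n, ∃ y ∈ E n, dist a y < ε n := fun n => by
    simpa using hEcov n ha
  choose y hyE hya using hnear
  -- `z 0 = 0`, so the telescoping series `∑ (z (n + 1) - z n)` sums to `lim z = a`.
  set z : ℕ → X := fun n => if n = 0 then 0 else y n
  have hzE : ∀ n, z n ∈ insert 0 (E n) := fun n => by
    by_cases hn : n = 0 <;> simp [z, hn, hyE]
  have hza : ∀ n, ‖a - z n‖ ≤ ε n := fun n => by
    by_cases hn : n = 0
    · simpa [z, hn, ε] using hKR ha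
    · simpa [z, hn, dist_eq_norm] using (hya n).le
  have hdz : ∀ n, ‖z (n + 1) - z n‖ ≤ 2 * R * 4⁻¹ ^ n := fun n => by
    calc ‖z (n + 1) - z n‖ = ‖(a - z n) - (a - z (n + 1))‖ := by congr 1; abel
      _ ≤ ε n + ε (n + 1) := norm_sub_le_of_le (hza n) (hza (n + 1))
      _ ≤ 2 * R * 4⁻¹ ^ n := by
        have h := (hε n).le
        simp only [ε, pow_succ] at h ⊢
        nlinarith
  refine ⟨fun n => z (n + 1) - z n, fun n => ⟨Set.sub_mem_sub ?_ (hzE n), ?_⟩, ?_⟩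
  · simpa [z] using hyE (n + 1)
  · simpa using hdz n
  have hsum : Summable fun n => ‖z (n + 1) - z n‖ :=
    .of_nonneg_of_le (fun _ => norm_nonneg _) hdz
      ((summable_geometric_of_lt_one (by norm_num) (by norm_num)).mul_left _)
  rw [hasSum_iff_tendsto_nat_of_summable_norm hsum]
  have hz0 : z 0 = 0 := if_pos rfl
  simp_rw [Finset.sum_range_sub, hz0, sub_zero]
  rw [tendsto_iff_norm_sub_tendsto_zero]
  simp_rw [norm_sub_rev]
  refine squeeze_zero (fun _ => norm_nonneg _) hza ?_
  simpa [ε] using (tendsto_pow_atTop_nhds_zero_of_lt_one (r := (4⁻¹ : ℝ)) (by norm_num)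
    (by norm_num)).const_mul R

end NormedGroup

section DyadicSums

variable {X : Type*} [NormedAddCommGroup X] [NormedSpace ℝ X]

def dyadicSums (F : ℕ → Set X) : Set X :=
  {a | ∃ θ : ℕ → X, (∀ n, θ n ∈ F n) ∧ HasSum (fun n => (2⁻¹ : ℝ) ^ n • θ n) a}

theorem TotallyBounded.exists_subset_dyadicSums {K : Set X} (hK : TotallyBounded K) :
    ∃ F : ℕ → Set X, (∀ n, (F n).Finite) ∧ IsCompact (insert 0 (⋃ n, F n)) ∧
      K ⊆ dyadicSums F := by
  obtain ⟨C, D, hDfin, hDC, hKD⟩ := hK.exists_finite_hasSum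
  refine ⟨fun n => (2 ^ n : ℝ) • D n, fun n => (hDfin n).smul_set,
    isCompact_insert_zero_iUnion (fun n => (hDfin n).smul_set) (r := fun n => C * 2⁻¹ ^ n) ?_ ?_,
    fun a ha => ?_⟩
  · simpa using (tendsto_pow_atTop_nhds_zero_of_lt_one (r := (2⁻¹ : ℝ)) (by norm_num)
      (by norm_num)).const_mul C
  · rintro n _ ⟨d, hd, rfl⟩
    have := mem_closedBall_zero_iff.mp (hDC n hd)
    rw [mem_closedBall_zero_iff, norm_smul, Real.norm_of_nonneg (by positivity)]
    calc (2 : ℝ) ^ n * ‖d‖ ≤ 2 ^ n * (C * 4⁻¹ ^ n) := by gcongr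
      _ = C * 2⁻¹ ^ n * (2 ^ n * 2⁻¹ ^ n) := by
        rw [show (4⁻¹ : ℝ) = 2⁻¹ * 2⁻¹ by norm_num, mul_pow]; ring
      _ = C * 2⁻¹ ^ n := by rw [← mul_pow]; norm_num
  · obtain ⟨d, hdD, hd⟩ := hKD a ha
    refine ⟨fun n => (2 ^ n : ℝ) • d n, fun n => Set.smul_mem_smul_set (hdD n), ?_⟩
    simpa [smul_smul, ← mul_pow] using hd

end DyadicSums

section Lifting

variable {Z X : Type*} [NormedAddCommGroup Z] [NormedSpace ℝ Z] [CompleteSpace Z]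
  [NormedAddCommGroup X] [NormedSpace ℝ X]

theorem isCompact_image_tsum_smul {s : ℕ → ℝ} (hs : Summable s) {D : ℕ → Set Z}
    (hD : ∀ n, IsCompact (D n)) (hD1 : ∀ n, D n ⊆ closedBall 0 1) :
    IsCompact ((fun ζ : ℕ → Z => ∑' n, s n • ζ n) '' Set.univ.pi D) := by
  refine (isCompact_univ_pi hD).image_of_continuousOn
    (continuousOn_tsum (fun n => ((continuous_apply n).const_smul (s n)).continuousOn) hs.abs
      fun n ζ hζ => ?_)
  rw [norm_smul, Real.norm_eq_abs]
  exact mul_le_of_le_one_right (abs_nonneg _)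
    (mem_closedBall_zero_iff.mp (hD1 n (hζ n (Set.mem_univ n))))

theorem exists_isCompact_dyadicSums_subset_image (T : Z →L[ℝ] X) {F : ℕ → Set X}
    (hF : ∀ n, (F n).Finite) (hFT : ⋃ n, F n ⊆ T '' closedBall 0 1) :
    ∃ K : Set Z, IsCompact K ∧ dyadicSums F ⊆ T '' K := by
  choose! σ hσB hσT using fun x (hx : x ∈ ⋃ n, F n) => hFT hx
  have hσ : ∀ n, Set.MapsTo σ (F n) (closedBall 0 1) := fun n x hx =>
    hσB x (Set.mem_iUnion_of_mem n hx)
  have hgeom : Summable fun n => (2⁻¹ : ℝ) ^ n :=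
    summable_geometric_of_lt_one (by norm_num) (by norm_num)
  refine ⟨(fun ζ : ℕ → Z => ∑' n, (2⁻¹ : ℝ) ^ n • ζ n) '' Set.univ.pi fun n => σ '' F n,
    isCompact_image_tsum_smul hgeom
    (fun n => ((hF n).image σ).isCompact) (fun n => (hσ n).image_subset), ?_⟩
  rintro a ⟨θ, hθF, hθa⟩
  have hσθ : ∀ n, T (σ (θ n)) = θ n := fun n => hσT _ (Set.mem_iUnion_of_mem n (hθF n))
  have hsum : Summable fun n => (2⁻¹ : ℝ) ^ n • σ (θ n) := by
    refine .of_norm_bounded hgeom fun n => ?_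
    rw [norm_smul, Real.norm_of_nonneg (by positivity)]
    exact mul_le_of_le_one_right (by positivity)
      (mem_closedBall_zero_iff.mp (hσ n (hθF n)))
  refine ⟨_, ⟨fun n => σ (θ n), fun n _ => Set.mem_image_of_mem σ (hθF n), rfl⟩, ?_⟩
  have hTsum := hsum.hasSum.mapL T
  simp only [map_smul, hσθ] at hTsum
  exact hTsum.unique hθa

end Lifting

theorem LinearMap.apply_mem_of_forall_mem_closedBall {E F : Type*} [NormedAddCommGroup E]
    [NormedSpace ℝ E] [AddCommGroup F] [Module ℝ F] {f : E →ₗ[ℝ] F} {p : Submodule ℝ F}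
    (h : ∀ x ∈ closedBall (0 : E) 1, f x ∈ p) (x : E) : f x ∈ p := by
  have hx : (‖x‖ + 1)⁻¹ • x ∈ closedBall (0 : E) 1 := by
    rw [mem_closedBall_zero_iff, norm_smul, norm_inv, Real.norm_of_nonneg (by positivity),
      inv_mul_le_iff₀ (by positivity)]
    linarith
  simpa [smul_smul, mul_inv_cancel₀ (by positivity : ‖x‖ + 1 ≠ 0)] using
    p.smul_mem (‖x‖ + 1) (h _ hx)

theorem LinearIsometry.exists_comp_eq_of_forall_mem_range {𝕜 W X Z : Type*}
    [NontriviallyNormedField 𝕜] [NormedAddCommGroup W] [NormedSpace 𝕜 W] [NormedAddCommGroup X]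
    [NormedSpace 𝕜 X] [NormedAddCommGroup Z] [NormedSpace 𝕜 Z] (ι : X →ₗᵢ[𝕜] Z) (f : W →L[𝕜] Z)
    (hf : ∀ w, f w ∈ LinearMap.range ι.toLinearMap) :
    ∃ T : W →L[𝕜] X, ∀ w, ι (T w) = f w := by
  let e := LinearEquiv.ofInjective ι.toLinearMap ι.injective
  let T : W →ₗ[𝕜] X := e.symm.toLinearMap ∘ₗ f.toLinearMap.codRestrict _ hf
  have hT : ∀ w, ι (T w) = f w := fun w =>
    congrArg Subtype.val (e.apply_symm_apply ⟨f w, hf w⟩)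
  refine ⟨T.mkContinuous ‖f‖ fun w => ?_, hT⟩
  rw [← ι.norm_map, hT]
  exact f.le_opNorm w

theorem compactOp_of_image_subset {E F : Type*} [NormedAddCommGroup E] [NormedSpace ℝ E]
    [NormedAddCommGroup F] [NormedSpace ℝ F] {f : E →L[ℝ] F} {K : Set F} (hK : IsCompact K)
    (hfK : f '' closedBall 0 1 ⊆ K) : CompactOp f :=
  hK.of_isClosed_subset isClosed_closure (closure_minimal hfK hK.isClosed)

section Bidual

variable {E X : Type*} [NormedAddCommGroup E] [NormedSpace ℝ E] [NormedAddCommGroup X]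
  [NormedSpace ℝ X]

-- `(v.precomp ℝ).precomp ℝ : E** →L[ℝ] X**` is the bitranspose `v**`.
theorem precomp_precomp_mem_image_inclusionInDoubleDual {v : E →L[ℝ] X} {C : Set X}
    (hC : IsCompact C) (hCconv : Convex ℝ C) (hCneg : ∀ x ∈ C, -x ∈ C)
    (hvC : v '' closedBall 0 1 ⊆ C) {z : StrongDual ℝ (StrongDual ℝ E)} (hz : ‖z‖ ≤ 1) :
    (v.precomp ℝ).precomp ℝ z ∈ inclusionInDoubleDual ℝ X '' C := by
  by_contra hzC
  have : LocallyConvexSpace ℝ (WeakDual ℝ (StrongDual ℝ X)) :=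
    WeakBilin.locallyConvexSpace (B := topDualPairing ℝ (StrongDual ℝ X))
  let j : X →L[ℝ] WeakDual ℝ (StrongDual ℝ X) :=
    Dual.continuousLinearMapToWeakDual ∘L inclusionInDoubleDual ℝ X
  obtain ⟨Φ, c, hΦC, hΦz⟩ := geometric_hahn_banach_closed_point
    (hCconv.linear_image j.toLinearMap) (hC.image j.continuous).isClosed
    (x := StrongDual.toWeakDual ((v.precomp ℝ).precomp ℝ z))
    (by rintro ⟨x, hx, hxz⟩; exact hzC ⟨x, hx, StrongDual.toWeakDual.injective hxz⟩)
  -- weak-* continuous functionals on `X**` are evaluations at points of `X*`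
  obtain ⟨g, rfl⟩ := LinearMap.dualEmbedding_surjective (topDualPairing ℝ (StrongDual ℝ X)) Φ
  have hgC : ∀ x ∈ C, |g x| < c := fun x hx => by
    have h₁ : g x < c := hΦC _ ⟨x, hx, rfl⟩
    have h₂ : g (-x) < c := hΦC _ ⟨-x, hCneg x hx, rfl⟩
    rw [map_neg] at h₂
    exact abs_lt.mpr ⟨by linarith, h₁⟩
  have hc : 0 ≤ c := (abs_nonneg _).trans (hgC 0 (hvC ⟨0, by simp, map_zero v⟩)).le
  have hgv : ‖g.comp v‖ ≤ c := ContinuousLinearMap.opNorm_le_of_unit_norm hc fun x hx =>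
    (hgC _ (hvC ⟨x, by simp [hx], rfl⟩)).le
  have : c < z (g.comp v) := hΦz
  have : z (g.comp v) ≤ c := calc
    z (g.comp v) ≤ ‖z‖ * ‖g.comp v‖ := (le_abs_self _).trans (z.le_opNorm _)
    _ ≤ 1 * c := by gcongr
    _ = c := one_mul c
  linarith

theorem exists_norm_le_one_precomp_precomp_eq {v : E →L[ℝ] X} {c : X}
    (hc : c ∈ closure (v '' closedBall 0 1)) :
    ∃ z : StrongDual ℝ (StrongDual ℝ E), ‖z‖ ≤ 1 ∧
      (v.precomp ℝ).precomp ℝ z = inclusionInDoubleDual ℝ X c := by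
  obtain ⟨xs, hxs, hlim⟩ := mem_closure_iff_seq_limit.mp hc
  choose p hp hpv using hxs
  obtain ⟨ζ, hζB, hζ⟩ := (WeakDual.isCompact_closedBall (0 : StrongDual ℝ (StrongDual ℝ E)) 1)
    |>.exists_mapClusterPt (f := atTop)
      (u := fun m => StrongDual.toWeakDual (inclusionInDoubleDual ℝ E (p m)))
      (tendsto_principal.mpr (Eventually.of_forall fun m => by
        simpa using (double_dual_bound ℝ E (p m)).trans (mem_closedBall_zero_iff.mp (hp m))))
  refine ⟨WeakDual.toStrongDual ζ, by simpa using hζB, ?_⟩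
  ext g
  obtain ⟨ψ, hψ, hζψ⟩ :=
    (hζ.continuousAt_comp (WeakDual.eval_continuous (g.comp v)).continuousAt).tendsto_subseq
  refine tendsto_nhds_unique hζψ ?_
  simpa [Function.comp_def, hpv] using ((g.continuous.tendsto c).comp hlim).comp hψ.tendsto_atTop

theorem CompactOp.exists_bidual_extension {v : E →L[ℝ] X} (hv : CompactOp v) :
    ∃ T : StrongDual ℝ (StrongDual ℝ E) →L[ℝ] X,
      CompactOp T ∧ closure (v '' closedBall 0 1) ⊆ T '' closedBall 0 1 := by
  set C := closure (v '' closedBall 0 1)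
  have hCconv : Convex ℝ C := ((convex_closedBall 0 1).linear_image v.toLinearMap).closure
  have hCneg : ∀ x ∈ C, -x ∈ C := fun x hx =>
    closure_mono (by rintro _ ⟨_, ⟨y, hy, rfl⟩, rfl⟩; exact ⟨-y, by simpa using hy, map_neg v y⟩)
      (image_closure_subset_closure_image continuous_neg ⟨x, hx, rfl⟩)
  have hbidual : ∀ z : StrongDual ℝ (StrongDual ℝ E), ‖z‖ ≤ 1 →
      (v.precomp ℝ).precomp ℝ z ∈ inclusionInDoubleDual ℝ X '' C := fun z hz =>
    precomp_precomp_mem_image_inclusionInDoubleDual hv hCconv hCneg subset_closure hz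
  obtain ⟨T, hT⟩ := (inclusionInDoubleDualLi ℝ).exists_comp_eq_of_forall_mem_range
    ((v.precomp ℝ).precomp ℝ) (LinearMap.apply_mem_of_forall_mem_closedBall fun z hz => by
      obtain ⟨x, -, hx⟩ := hbidual z (mem_closedBall_zero_iff.mp hz)
      exact ⟨x, hx⟩)
  have hι : Injective (inclusionInDoubleDual ℝ X) := (inclusionInDoubleDualLi ℝ).injective
  refine ⟨T, compactOp_of_image_subset hv ?_, fun c hc => ?_⟩
  · rintro _ ⟨z, hz, rfl⟩
    obtain ⟨x, hx, hxz⟩ := hbidual z (mem_closedBall_zero_iff.mp hz)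
    rwa [hι (hxz.trans (hT z).symm)] at hx
  · obtain ⟨z, hz, hzc⟩ := exists_norm_le_one_precomp_precomp_eq hc
    exact ⟨z, mem_closedBall_zero_iff.mpr hz, hι ((hT z).trans hzc)⟩

end Bidual

theorem CompactOp.liftQL {Z X : Type*} [NormedAddCommGroup Z] [NormedSpace ℝ Z]
    [NormedAddCommGroup X] [NormedSpace ℝ X] {T : Z →L[ℝ] X} (hT : CompactOp T)
    (S : Submodule ℝ Z) [IsClosed (S : Set Z)] (h : S ≤ T.ker) : CompactOp (S.liftQL T h) := by
  refine compactOp_of_image_subset (hT.smul (2 : ℝ)) ?_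
  rintro _ ⟨ξ, hξ, rfl⟩
  obtain ⟨m, rfl, hm⟩ := Submodule.Quotient.norm_mk_lt ξ one_pos
  have hm2 : (2⁻¹ : ℝ) • m ∈ closedBall 0 1 := by
    rw [mem_closedBall_zero_iff] at hξ ⊢
    rw [norm_smul, Real.norm_of_nonneg (by norm_num)]
    linarith
  refine ⟨T ((2⁻¹ : ℝ) • m), subset_closure ⟨_, hm2, rfl⟩, ?_⟩
  simp [smul_smul]

theorem exists_compactOp_comp_eq_of_injective {Y Q X : Type*} [NormedAddCommGroup Y]
    [NormedSpace ℝ Y] [NormedAddCommGroup Q] [NormedSpace ℝ Q] [NormedAddCommGroup X]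
    [NormedSpace ℝ X] {v : Q →L[ℝ] X} (hv : Injective v) (u : Y →L[ℝ] X) {K : Set Q}
    (hK : IsCompact K) (hu : u '' closedBall 0 1 ⊆ v '' K) :
    ∃ w : Y →L[ℝ] Q, CompactOp w ∧ u = v.comp w := by
  have hrange : ∀ y, u y ∈ LinearMap.range v.toLinearMap :=
    LinearMap.apply_mem_of_forall_mem_closedBall fun y hy => by
      obtain ⟨k, -, hk⟩ := hu ⟨y, hy, rfl⟩
      exact ⟨k, hk⟩
  let w : Y →ₗ[ℝ] Q :=
    (LinearEquiv.ofInjective v.toLinearMap hv).symm.toLinearMap ∘ₗ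
      u.toLinearMap.codRestrict _ hrange
  have hvw : ∀ y, v (w y) = u y := fun y =>
    congrArg Subtype.val ((LinearEquiv.ofInjective v.toLinearMap hv).apply_symm_apply ⟨u y, _⟩)
  have hwK : ∀ y ∈ closedBall (0 : Y) 1, w y ∈ K := fun y hy => by
    obtain ⟨k, hk, hkv⟩ := hu ⟨y, hy, rfl⟩
    rwa [← hv (hkv.trans (hvw y).symm)]
  obtain ⟨R, hR⟩ := hK.isBounded.subset_closedBall 0
  obtain ⟨C, hC⟩ := LinearMap.bound_of_ball_bound one_pos R w fun y hy =>
    mem_closedBall_zero_iff.mp (hR (hwK y (ball_subset_closedBall hy)))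
  refine ⟨w.mkContinuous C hC, compactOp_of_image_subset hK ?_, ?_⟩
  · rintro _ ⟨y, hy, rfl⟩
    exact hwK y hy
  · ext y
    exact (hvw y).symm

theorem compact_factorization_of_property_K_general (X : Type u) [NormedAddCommGroup X]
    [NormedSpace ℝ X] (hX : PropertyK X) :
    ∀ (Y : Type v) [NormedAddCommGroup Y] [NormedSpace ℝ Y] [CompleteSpace Y]
      (u : Y →L[ℝ] X), CompactOp u →
      ∃ (Q : Type u) (_ : NormedAddCommGroup Q) (_ : NormedSpace ℝ Q) (_ : CompleteSpace Q)
        (q : StrongDual ℝ (StrongDual ℝ X) →L[ℝ] Q), Surjective q ∧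
        ∃ (v : Q →L[ℝ] X) (w : Y →L[ℝ] Q),
          CompactOp v ∧ CompactOp w ∧ u = v.comp w := by
  intro Y _ _ _ u hu
  obtain ⟨F, hF, hF0, huF⟩ := hu.totallyBounded.exists_subset_dyadicSums
  obtain ⟨v₀, hv₀, hFv₀⟩ := hX _ hF0
  obtain ⟨T, hT, hv₀T⟩ := hv₀.exists_bidual_extension
  obtain ⟨K, hK, hFK⟩ := exists_isCompact_dyadicSums_subset_image T hF
    ((Set.subset_insert _ _).trans (hFv₀.trans hv₀T))
  let N := T.ker
  have : IsClosed (N : Set (StrongDual ℝ (StrongDual ℝ X))) := T.isClosed_ker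
  have hinj : Injective (N.liftQL T le_rfl) :=
    LinearMap.ker_eq_bot.mp (N.ker_liftQ_eq_bot _ _ le_rfl)
  obtain ⟨w, hw, rfl⟩ := exists_compactOp_comp_eq_of_injective hinj u (hK.image N.mkQL.continuous)
    (calc u '' closedBall 0 1 ⊆ dyadicSums F := subset_closure.trans huF
      _ ⊆ T '' K := hFK
      _ = N.liftQL T le_rfl '' (N.mkQL '' K) := by rw [Set.image_image]; rfl)
  exact ⟨_, inferInstance, inferInstance, inferInstance, N.mkQL, N.mkQ_surjective, _, w,
    hT.liftQL N le_rfl, hw, rfl⟩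

/-- Proposition 2(a): if `X` has property (𝒦), then every compact operator `u : Y → X`
factors compactly through a quotient `Q` of `X**`. -/
theorem compact_factorization_of_property_K (X : Type u) [NormedAddCommGroup X]
    [NormedSpace ℝ X] [CompleteSpace X] (hX : PropertyK X) :
    ∀ (Y : Type v) [NormedAddCommGroup Y] [NormedSpace ℝ Y] [CompleteSpace Y]
      (u : Y →L[ℝ] X), CompactOp u →
      ∃ (Q : Type u) (_ : NormedAddCommGroup Q) (_ : NormedSpace ℝ Q) (_ : CompleteSpace Q)
        (q : StrongDual ℝ (StrongDual ℝ X) →L[ℝ] Q), Surjective q ∧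
        ∃ (v : Q →L[ℝ] X) (w : Y →L[ℝ] Q),
          CompactOp v ∧ CompactOp w ∧ u = v.comp w :=
  compact_factorization_of_property_K_general X hX
end

section
/- Let X be a real Banach space. Suppose that for every real Banach space Y and every compact operator u : Y → X there are a quotient Q of X together with a compact operator v : Q → X and a compact operator w : Y → Q** such that u = v** ∘ w. Then X has property (𝒦). -/
set_option maxSynthPendingDepth 3

open Filter Topology Metric NormedSpace Function

/-- The dual (adjoint/transpose) operator `Y* → X*` of `u : X → Y`. -/
noncomputable def dualOp {X Y : Type*} [NormedAddCommGroup X] [NormedSpace ℝ X]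
    [NormedAddCommGroup Y] [NormedSpace ℝ Y] (u : X →L[ℝ] Y) :
    StrongDual ℝ Y →L[ℝ] StrongDual ℝ X :=
  (ContinuousLinearMap.compL ℝ X Y ℝ).flip u

/-- The bidual operator `X** → Y**` of `u : X → Y`. -/
noncomputable def bidualOp {X Y : Type*} [NormedAddCommGroup X] [NormedSpace ℝ X]
    [NormedAddCommGroup Y] [NormedSpace ℝ Y] (u : X →L[ℝ] Y) :
    StrongDual ℝ (StrongDual ℝ X) →L[ℝ] StrongDual ℝ (StrongDual ℝ Y) :=
  dualOp (dualOp u)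

/-!
A compact set `K ⊆ X` lies in the closure of `u(B)` for a compact operator `u : ℓ¹ → X` sending
the unit vectors onto a dense sequence of `K` (it maps the unit ball into the closed absolutely
convex hull of that sequence). Factor `u = v** ∘ w` through a quotient `q : X → Q`. For every
functional `f` on `X` and `‖y‖ ≤ 1`, `f (u y) = (w y) (f ∘ v) ≤ r ‖f ∘ v‖` whenever `‖w‖ ≤ r`, so
Hahn–Banach separation gives `u(B) ⊆ closure v(r • B_Q)`. By the open mapping theorem `r • B_Q`
lies in `q(C r • B_X)`, so the compact operator `T = C r • v ∘ q` on `X` satisfies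
`K ⊆ closure T(B_X)`.
-/

open scoped lp Pointwise

section AbsConvexSum

variable {ι E : Type*} [AddCommGroup E] [Module ℝ E] {A : Set E}

theorem AbsConvex.sum_smul_mem_sum_abs_smul (hA : AbsConvex ℝ A) (hA₀ : A.Nonempty)
    (s : Finset ι) (a : ι → ℝ) {x : ι → E} (hx : ∀ i ∈ s, x i ∈ A) :
    ∑ i ∈ s, a i • x i ∈ (∑ i ∈ s, |a i|) • A := by
  classical
  induction s using Finset.induction_on with
  | empty => simp [Set.zero_smul_set hA₀]
  | insert j s hj ih =>
    rw [Finset.sum_insert hj, Finset.sum_insert hj,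
      hA.2.add_smul (abs_nonneg _) (Finset.sum_nonneg fun i _ => abs_nonneg _),
      hA.1.smul_congr (a := |a j|) (b := a j) (by simp)]
    exact Set.add_mem_add (Set.smul_mem_smul_set (hx j (Finset.mem_insert_self j s)))
      (ih fun i hi => hx i (Finset.mem_insert_of_mem hi))

theorem AbsConvex.sum_smul_mem (hA : AbsConvex ℝ A) (hA₀ : A.Nonempty)
    {s : Finset ι} {a : ι → ℝ} {x : ι → E} (hx : ∀ i ∈ s, x i ∈ A)
    (ha : ∑ i ∈ s, |a i| ≤ 1) : ∑ i ∈ s, a i • x i ∈ A := by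
  obtain ⟨y, hy, hxy⟩ := hA.sum_smul_mem_sum_abs_smul hA₀ s a hx
  rw [← hxy]
  refine hA.1.smul_mem ?_ hy
  rwa [Real.norm_of_nonneg (Finset.sum_nonneg fun i _ => abs_nonneg _)]

end AbsConvexSum

theorem compactOp_iff_isCompactOperator {X Y : Type*} [NormedAddCommGroup X] [NormedSpace ℝ X]
    [NormedAddCommGroup Y] [NormedSpace ℝ Y] (u : X →L[ℝ] Y) :
    CompactOp u ↔ IsCompactOperator u :=
  (isCompactOperator_iff_isCompact_closure_image_closedBall (u : X →ₗ[ℝ] Y) one_pos).symm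

namespace lp

variable {ι X : Type*} [NormedAddCommGroup X] [NormedSpace ℝ X] [CompleteSpace X]

noncomputable def synthesis (k : ι → X) {M : ℝ} (hM₀ : 0 ≤ M) (hM : ∀ i, ‖k i‖ ≤ M) :
    ℓ¹(ι, ℝ) →L[ℝ] X :=
  (tsumCLM ℝ ι X).comp
    (mapCLM 1 (fun i => ContinuousLinearMap.toSpanSingleton ℝ (k i)) hM₀ (by simpa using hM))

variable (k : ι → X) {M : ℝ} (hM₀ : 0 ≤ M) (hM : ∀ i, ‖k i‖ ≤ M)

theorem synthesis_apply (a : ℓ¹(ι, ℝ)) : synthesis k hM₀ hM a = ∑' i, a i • k i := rfl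

theorem synthesis_single [DecidableEq ι] (i : ι) : synthesis k hM₀ hM (lp.single 1 i 1) = k i := by
  rw [synthesis_apply, tsum_eq_single i fun j hj => by simp [hj]]
  simp

theorem hasSum_synthesis (a : ℓ¹(ι, ℝ)) :
    HasSum (fun i => a i • k i) (synthesis k hM₀ hM a) := by
  set f := mapCLM 1 (fun i => ContinuousLinearMap.toSpanSingleton ℝ (k i)) hM₀
    (by simpa using hM) a
  have hf : Summable f := .of_norm (by simpa using (lp.memℓp f).summable (p := 1) (by simp))
  exact hf.hasSum

theorem synthesis_image_closedBall_subset [Nonempty ι] :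
    synthesis k hM₀ hM '' Metric.closedBall 0 1 ⊆ closedAbsConvexHull ℝ (Set.range k) := by
  rintro - ⟨a, ha, rfl⟩
  rw [closedAbsConvexHull_eq_closure_absConvexHull]
  refine mem_closure_of_tendsto (hasSum_synthesis k hM₀ hM a) (.of_forall fun s => ?_)
  refine absConvex_absConvexHull.sum_smul_mem (Set.range_nonempty k).absConvexHull
    (fun i _ => subset_absConvexHull (Set.mem_range_self i)) ?_
  simpa using (lp.sum_rpow_le_norm_rpow (p := 1) (by simp) a s).trans
    (by simpa using mem_closedBall_zero_iff.mp ha)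

theorem compactOp_synthesis [Nonempty ι] (hk : TotallyBounded (Set.range k)) :
    CompactOp (synthesis k hM₀ hM) :=
  (isCompact_closedAbsConvexHull_of_totallyBounded hk).of_isClosed_subset isClosed_closure
    (closure_minimal (synthesis_image_closedBall_subset k hM₀ hM) isClosed_closedAbsConvexHull)

theorem range_subset_synthesis_image_closedBall :
    Set.range k ⊆ synthesis k hM₀ hM '' Metric.closedBall 0 1 := by
  classical
  rintro - ⟨i, rfl⟩
  exact ⟨lp.single 1 i 1, by simp [lp.norm_single], synthesis_single k hM₀ hM i⟩

end lp

theorem IsCompact.exists_seq_totallyBounded_range {X : Type*} [NormedAddCommGroup X]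
    {K : Set X} (hK : IsCompact K) :
    ∃ k : ℕ → X, TotallyBounded (Set.range k) ∧ K ⊆ closure (Set.range k) := by
  obtain ⟨t, htK, htc, hKt⟩ := hK.isSeparable.exists_countable_dense_subset
  obtain ⟨k, hk⟩ := (htc.insert 0).exists_eq_range (Set.insert_nonempty 0 t)
  refine ⟨k, ?_, hKt.trans (closure_mono ?_)⟩
  · rw [← hk]
    exact (hK.insert 0).totallyBounded.subset (Set.insert_subset_insert htK)
  · exact hk ▸ Set.subset_insert 0 t

theorem exists_compactOp_l1_subset_closure_image {X : Type*} [NormedAddCommGroup X]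
    [NormedSpace ℝ X] [CompleteSpace X] {K : Set X} (hK : IsCompact K) :
    ∃ u : ℓ¹(ULift.{w} ℕ, ℝ) →L[ℝ] X, CompactOp u ∧ K ⊆ closure (u '' Metric.closedBall 0 1) := by
  obtain ⟨k, hk, hKk⟩ := hK.exists_seq_totallyBounded_range
  obtain ⟨M, hM⟩ := hk.isBounded.exists_norm_le
  have hM₀ : 0 ≤ M := (norm_nonneg _).trans (hM (k 0) (Set.mem_range_self 0))
  have hrange : Set.range (k ∘ ULift.down) = Set.range k := ULift.down_surjective.range_comp k
  have hbound : ∀ i, ‖(k ∘ ULift.down) i‖ ≤ M := fun i => hM _ (Set.mem_range_self _)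
  refine ⟨lp.synthesis (k ∘ ULift.down) hM₀ hbound,
    lp.compactOp_synthesis _ hM₀ hbound (hrange ▸ hk), hKk.trans (closure_mono ?_)⟩
  exact hrange ▸ lp.range_subset_synthesis_image_closedBall _ hM₀ hbound

section Separation

variable {Q X : Type*} [NormedAddCommGroup Q] [NormedSpace ℝ Q]
  [NormedAddCommGroup X] [NormedSpace ℝ X]

theorem mem_closure_image_closedBall_of_forall_le (v : Q →L[ℝ] X) {r : ℝ} (hr : 0 < r) {x : X}
    (hx : ∀ f : StrongDual ℝ X, f x ≤ r * ‖f.comp v‖) :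
    x ∈ closure (v '' Metric.closedBall 0 r) := by
  by_contra hxS
  obtain ⟨f, c, hfS, hfx⟩ := geometric_hahn_banach_closed_point
    ((convex_closedBall 0 r).linear_image (v : Q →ₗ[ℝ] X)).closure isClosed_closure hxS
  have hfv : ∀ z ∈ Metric.closedBall (0 : Q) r, f (v z) < c := fun z hz =>
    hfS _ (subset_closure ⟨z, hz, rfl⟩)
  have hnorm : ‖f.comp v‖ ≤ c / r := by
    refine ContinuousLinearMap.opNorm_bound_of_ball_bound hr c _ fun z hz => ?_
    have hneg := hfv (-z) (by simpa using hz)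
    rw [map_neg, map_neg] at hneg
    exact abs_le.mpr ⟨neg_le_of_neg_le hneg.le, (hfv z hz).le⟩
  linarith [hx f, (le_div_iff₀' hr).mp hnorm]

theorem image_closedBall_subset_closure_of_bidualOp_comp_eq {Y : Type*} [NormedAddCommGroup Y]
    [NormedSpace ℝ Y] {u : Y →L[ℝ] X} {v : Q →L[ℝ] X}
    {w : Y →L[ℝ] StrongDual ℝ (StrongDual ℝ Q)}
    (h : (NormedSpace.inclusionInDoubleDual ℝ X).comp u = (bidualOp v).comp w)
    {r : ℝ} (hr : 0 < r) (hw : ‖w‖ ≤ r) :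
    u '' Metric.closedBall 0 1 ⊆ closure (v '' Metric.closedBall 0 r) := by
  rintro - ⟨b, hb, rfl⟩
  refine mem_closure_image_closedBall_of_forall_le v hr fun f => ?_
  calc f (u b) = w b (f.comp v) := congr($h b f)
    _ ≤ ‖w b‖ * ‖f.comp v‖ := (Real.le_norm_self _).trans ((w b).le_opNorm _)
    _ ≤ r * ‖f.comp v‖ := by
      gcongr
      simpa using w.le_of_opNorm_le_of_le hw (mem_closedBall_zero_iff.mp hb)

end Separation

theorem exists_compactOp_image_closedBall_subset {X Q Z : Type*} [NormedAddCommGroup X]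
    [NormedSpace ℝ X] [CompleteSpace X] [NormedAddCommGroup Q] [NormedSpace ℝ Q] [CompleteSpace Q]
    [NormedAddCommGroup Z] [NormedSpace ℝ Z] {q : X →L[ℝ] Q} (hq : Surjective q)
    {v : Q →L[ℝ] Z} (hv : CompactOp v) {r : ℝ} (hr : 0 < r) :
    ∃ T : X →L[ℝ] Z, CompactOp T ∧ v '' Metric.closedBall 0 r ⊆ T '' Metric.closedBall 0 1 := by
  obtain ⟨C, hC, hlift⟩ := q.exists_preimage_norm_le hq
  have hCr : 0 < C * r := mul_pos hC hr
  refine ⟨(C * r) • v.comp q, ?_, ?_⟩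
  · rw [compactOp_iff_isCompactOperator] at hv ⊢
    exact (hv.comp_clm q).smul (C * r)
  · rintro - ⟨z, hz, rfl⟩
    obtain ⟨x, rfl, hx⟩ := hlift z
    refine ⟨(C * r)⁻¹ • x, ?_, ?_⟩
    · rw [mem_closedBall_zero_iff, norm_smul, Real.norm_of_nonneg (inv_nonneg.mpr hCr.le),
        inv_mul_le_one₀ hCr]
      exact hx.trans (by gcongr; exact mem_closedBall_zero_iff.mp hz)
    · rw [smul_apply, ContinuousLinearMap.comp_apply, map_smul, map_smul,
        smul_smul, mul_inv_cancel₀ hCr.ne', one_smul]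

/-- `v** : Q** → X` is encoded through the canonical embedding `ι : X → X**`: the factorization
`u = v** ∘ w` is written `ι ∘ u = v** ∘ w` in `X**`. -/
theorem property_K_of_quotient_factorization (X : Type u) [NormedAddCommGroup X]
    [NormedSpace ℝ X] [CompleteSpace X]
    (h : ∀ (Y : Type v) [NormedAddCommGroup Y] [NormedSpace ℝ Y] [CompleteSpace Y]
      (u : Y →L[ℝ] X), CompactOp u →
      ∃ (Q : Type u) (_ : NormedAddCommGroup Q) (_ : NormedSpace ℝ Q) (_ : CompleteSpace Q)
        (q : X →L[ℝ] Q), Surjective q ∧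
        ∃ (v : Q →L[ℝ] X) (w : Y →L[ℝ] StrongDual ℝ (StrongDual ℝ Q)),
          CompactOp v ∧ CompactOp w ∧
          (NormedSpace.inclusionInDoubleDual ℝ X).comp u = (bidualOp v).comp w) :
    PropertyK X := by
  intro K hK
  obtain ⟨u, hu, hKu⟩ := exists_compactOp_l1_subset_closure_image.{u, v} hK
  obtain ⟨Q, _, _, _, q, hq, v, w, hv, -, hfac⟩ := h _ u hu
  have hr : 0 < ‖w‖ + 1 := by positivity
  obtain ⟨T, hT, hvT⟩ := exists_compactOp_image_closedBall_subset hq hv hr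
  refine ⟨T, hT, hKu.trans (closure_minimal ?_ isClosed_closure)⟩
  exact (image_closedBall_subset_closure_of_bidualOp_comp_eq hfac hr (by linarith)).trans
    (closure_mono hvT)
end

section
/- Let X and Z be real Banach spaces such that Z is a quotient of X, and suppose that every compact operator u : ℓ₁ → X can be written as u = v ∘ w with w : ℓ₁ → Z a compact operator and v : Z → X an approximable operator. Then X has property (F̄). -/
set_option maxSynthPendingDepth 3

open Filter Topology Metric NormedSpace Function

/-- The Banach space ℓ₁ of absolutely summable real sequences. -/
noncomputable abbrev ellOne : Type := lp (fun _ : ℕ => ℝ) 1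

/-
A compact set `K ⊆ X` lies in the closure of the range of a sequence `(kₙ)` in `K ∪ {0}`. Since
`B_{ℓ₁}` is the closed absolutely convex hull of the unit vectors, the operator
`u : ℓ₁ → X`, `a ↦ ∑ aₙ kₙ`, maps `B_{ℓ₁}` into the closed absolutely convex hull of `K ∪ {0}`,
which is compact; so `u` is compact and `K ⊆ closure (u B_{ℓ₁})`. Factor `u = v ∘ w`. By the open
mapping theorem `w B_{ℓ₁} ⊆ q (c B_X)` for some `c`, so the approximable operator `v ∘ (c q)`
maps `B_X` onto a superset of `u B_{ℓ₁}`.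
-/

open scoped lp Pointwise

theorem AbsConvex.sum_smul_mem_s5 {E : Type*} [AddCommGroup E] [Module ℝ E] {T : Set E}
    (hT : AbsConvex ℝ T) (hT₀ : T.Nonempty) {ι : Type*} (s : Finset ι) (c : ι → ℝ)
    {p : ι → E} (hp : ∀ i ∈ s, p i ∈ T) (hc : ∑ i ∈ s, |c i| ≤ 1) :
    ∑ i ∈ s, c i • p i ∈ T := by
  classical
  have hscaled : ∑ i ∈ s, c i • p i ∈ (∑ i ∈ s, |c i|) • T := by
    clear hc
    induction s using Finset.induction_on with
    | empty => simp [Set.zero_smul_set hT₀]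
    | insert j s hj ih =>
      rw [Finset.sum_insert hj, Finset.sum_insert hj, hT.2.add_smul (abs_nonneg _)
        (Finset.sum_nonneg fun i _ => abs_nonneg _)]
      refine Set.add_mem_add ?_ (ih fun i hi => hp i (Finset.mem_insert_of_mem hi))
      rw [← hT.1.smul_congr (a := c j) (by simp)]
      exact Set.smul_mem_smul_set (hp j (Finset.mem_insert_self j s))
  have hnorm : ‖∑ i ∈ s, |c i|‖ ≤ ‖(1 : ℝ)‖ := by
    rwa [norm_one, Real.norm_of_nonneg (Finset.sum_nonneg fun i _ => abs_nonneg (c i))]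
  simpa using hT.1.smul_mono hnorm hscaled

theorem ContinuousLinearMap.image_closedAbsConvexHull_subset {𝕜 E F : Type*} [NormedField 𝕜]
    [PartialOrder 𝕜] [AddCommGroup E] [Module 𝕜 E] [TopologicalSpace E]
    [AddCommGroup F] [Module 𝕜 F] [TopologicalSpace F] (u : E →L[𝕜] F) (s : Set E) :
    u '' closedAbsConvexHull 𝕜 s ⊆ closedAbsConvexHull 𝕜 (u '' s) := by
  rw [Set.image_subset_iff]
  exact closedAbsConvexHull_min (Set.image_subset_iff.1 subset_closedAbsConvexHull)
    ⟨absConvex_convexClosedHull.1.mulActionHom_preimage u.toLinearMap.toMulActionHom,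
      absConvex_convexClosedHull.2.linear_preimage (u : E →ₗ[𝕜] F)⟩
    (isClosed_closedAbsConvexHull.preimage u.continuous)

namespace lp

theorem closedBall_one_subset_closedAbsConvexHull_single (α : Type*) [DecidableEq α]
    [Nonempty α] :
    closedBall (0 : ℓ¹(α, ℝ)) 1 ⊆
      closedAbsConvexHull ℝ (Set.range fun i => lp.single (E := fun _ => ℝ) 1 i 1) := by
  intro f hf
  refine isClosed_closedAbsConvexHull.mem_of_tendsto (lp.hasSum_single ENNReal.one_ne_top f)
    (Eventually.of_forall fun s => ?_)
  have hsingle : ∀ i, lp.single 1 i (f i) = f i • lp.single (E := fun _ => ℝ) 1 i 1 :=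
    fun i => by rw [← lp.single_smul, smul_eq_mul, mul_one]
  simp only [hsingle]
  refine absConvex_convexClosedHull.sum_smul_mem_s5
    ((Set.range_nonempty _).mono subset_closedAbsConvexHull) s f
    (fun i _ => subset_closedAbsConvexHull ⟨i, rfl⟩) ?_
  simpa [← Real.norm_eq_abs] using (lp.sum_rpow_le_norm_rpow (p := 1) (by simp) f s).trans
    (by simpa using hf)

variable {α E : Type*} [NormedAddCommGroup E] [NormedSpace ℝ E] [CompleteSpace E]

noncomputable def tsumSmulCLM (k : α → E) {M : ℝ} (hM : 0 ≤ M) (hk : ∀ i, ‖k i‖ ≤ M) :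
    ℓ¹(α, ℝ) →L[ℝ] E :=
  tsumCLM ℝ α E ∘L mapCLM 1 (fun i => ContinuousLinearMap.toSpanSingleton ℝ (k i)) hM
    (by simpa using hk)

variable (k : α → E) {M : ℝ} (hM : 0 ≤ M) (hk : ∀ i, ‖k i‖ ≤ M)

theorem tsumSmulCLM_apply (a : ℓ¹(α, ℝ)) : tsumSmulCLM k hM hk a = ∑' i, a i • k i := rfl

theorem tsumSmulCLM_single [DecidableEq α] (i : α) :
    tsumSmulCLM k hM hk (lp.single 1 i 1) = k i := by
  rw [tsumSmulCLM_apply, tsum_eq_single i fun j hj => by simp [hj]]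
  simp

theorem tsumSmulCLM_image_closedBall_subset [DecidableEq α] [Nonempty α] :
    tsumSmulCLM k hM hk '' closedBall 0 1 ⊆ closedAbsConvexHull ℝ (Set.range k) := by
  refine (Set.image_mono (closedBall_one_subset_closedAbsConvexHull_single α)).trans ?_
  refine ((tsumSmulCLM k hM hk).image_closedAbsConvexHull_subset _).trans ?_
  rw [← Set.range_comp]
  simp [Function.comp_def, tsumSmulCLM_single]

end lp

theorem exists_compactOp_ellOne_subset_closure_image {X : Type*} [NormedAddCommGroup X]
    [NormedSpace ℝ X] [CompleteSpace X] {K : Set X} (hK : IsCompact K) :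
    ∃ u : ellOne →L[ℝ] X, CompactOp u ∧ K ⊆ closure (u '' closedBall 0 1) := by
  obtain ⟨t, htK, htc, hKt⟩ := hK.isSeparable.exists_countable_dense_subset
  -- `0` is added so that the sequence exists even when `K = ∅`
  obtain ⟨k, hk⟩ := (htc.insert 0).exists_eq_range (Set.insert_nonempty 0 t)
  have hkL : Set.range k ⊆ insert 0 K := hk ▸ Set.insert_subset_insert htK
  obtain ⟨M, hM, hkM⟩ := (hK.insert 0).isBounded.exists_pos_norm_le
  set u := lp.tsumSmulCLM k hM.le fun i => hkM _ (hkL ⟨i, rfl⟩)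
  have hu : u '' closedBall 0 1 ⊆ closedAbsConvexHull ℝ (insert 0 K) :=
    (lp.tsumSmulCLM_image_closedBall_subset _ _ _).trans ((closedAbsConvexHull ℝ).monotone hkL)
  have hcompact : IsCompact (closedAbsConvexHull ℝ (insert 0 K)) :=
    isCompact_closedAbsConvexHull_of_totallyBounded (hK.insert 0).totallyBounded
  refine ⟨u, hcompact.of_isClosed_subset isClosed_closure
    (closure_minimal hu hcompact.isClosed), hKt.trans (closure_mono ?_)⟩
  rintro x hx
  obtain ⟨i, rfl⟩ : x ∈ Set.range k := hk ▸ Set.mem_insert_of_mem 0 hx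
  exact ⟨lp.single 1 i 1, by simp [lp.norm_single], lp.tsumSmulCLM_single _ _ _ i⟩

theorem FinRankOp.comp_right {X Y Z : Type*} [NormedAddCommGroup X] [NormedSpace ℝ X]
    [NormedAddCommGroup Y] [NormedSpace ℝ Y] [NormedAddCommGroup Z] [NormedSpace ℝ Z]
    {f : Z →L[ℝ] Y} (hf : FinRankOp f) (q : X →L[ℝ] Z) : FinRankOp (f ∘L q) := by
  unfold FinRankOp at *
  exact Submodule.finiteDimensional_of_le (LinearMap.range_comp_le_range (q : X →ₗ[ℝ] Z) _)

theorem ApproxOp.comp_right {X Y Z : Type*} [NormedAddCommGroup X] [NormedSpace ℝ X]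
    [NormedAddCommGroup Y] [NormedSpace ℝ Y] [NormedAddCommGroup Z] [NormedSpace ℝ Z]
    {v : Z →L[ℝ] Y} (hv : ApproxOp v) (q : X →L[ℝ] Z) : ApproxOp (v ∘L q) :=
  map_mem_closure (f := fun g : Z →L[ℝ] Y => g ∘L q)
    ((ContinuousLinearMap.compL ℝ X Z Y).flip q).continuous hv
    fun _ hf => FinRankOp.comp_right hf q

theorem ContinuousLinearMap.exists_image_closedBall_subset_image_smul_closedBall
    {E X Z : Type*} [NormedAddCommGroup E] [NormedSpace ℝ E]
    [NormedAddCommGroup X] [NormedSpace ℝ X] [CompleteSpace X]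
    [NormedAddCommGroup Z] [NormedSpace ℝ Z] [CompleteSpace Z]
    {q : X →L[ℝ] Z} (hq : Surjective q) (w : E →L[ℝ] Z) :
    ∃ c : ℝ, w '' closedBall 0 1 ⊆ (c • q) '' closedBall 0 1 := by
  obtain ⟨C, hC, hpre⟩ := q.exists_preimage_norm_le hq
  set c := C * ‖w‖ + 1
  have hc : 0 < c := by positivity
  refine ⟨c, ?_⟩
  rintro _ ⟨a, ha, rfl⟩
  obtain ⟨x, hqx, hx⟩ := hpre (w a)
  have hxc : ‖x‖ ≤ c := calc
    ‖x‖ ≤ C * ‖w a‖ := hx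
    _ ≤ C * ‖w‖ := by gcongr; simpa using w.le_opNorm_of_le (mem_closedBall_zero_iff.1 ha)
    _ ≤ c := by linarith
  refine ⟨c⁻¹ • x, ?_, ?_⟩
  · rw [mem_closedBall_zero_iff, norm_smul, Real.norm_of_nonneg (inv_nonneg.2 hc.le)]
    exact inv_mul_le_one_of_le₀ hxc hc.le
  · simp [smul_smul, hc.ne', hqx]

/-- The Lemma: if `Z` is a quotient of `X` and every compact operator `ℓ₁ → X` factors as an
approximable operator `Z → X` following a compact operator `ℓ₁ → Z`, then `X` has
property (F̄). -/
theorem property_F_of_factorization_through_quotient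
    (X : Type u) [NormedAddCommGroup X] [NormedSpace ℝ X] [CompleteSpace X]
    (Z : Type v) [NormedAddCommGroup Z] [NormedSpace ℝ Z] [CompleteSpace Z]
    (q : X →L[ℝ] Z) (hq : Surjective q)
    (h : ∀ u : ellOne →L[ℝ] X, CompactOp u →
      ∃ (w : ellOne →L[ℝ] Z) (v : Z →L[ℝ] X),
        CompactOp w ∧ ApproxOp v ∧ u = v.comp w) :
    PropertyF X := by
  intro K hK
  obtain ⟨u, hu, hKu⟩ := exists_compactOp_ellOne_subset_closure_image hK
  obtain ⟨w, v, -, hv, rfl⟩ := h u hu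
  obtain ⟨c, hc⟩ := q.exists_image_closedBall_subset_image_smul_closedBall hq w
  refine ⟨v ∘L (c • q), hv.comp_right _, hKu.trans (closure_mono ?_)⟩
  simp only [ContinuousLinearMap.coe_comp, Set.image_comp]
  exact Set.image_mono hc
end

section
/- If a real Banach space X admits a quotient which is isomorphic to ℓ₁ (i.e., there is a bounded linear surjection from X onto a Banach space linearly homeomorphic to ℓ₁), then X has property (F̄). -/
set_option maxSynthPendingDepth 3

open Filter Topology Metric NormedSpace Function

/-!
Every compact set `K` in a Banach space is reached by sums `∑ dₙ` with `dₙ` drawn from finite sets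
`Dₙ` of norm `O(4⁻ⁿ)`: differences of successive approximations of `K` by ever finer finite nets.
Sending the `n`-th block of basis vectors of `ℓ₁` onto `2ⁿ⁺¹ Dₙ` defines an operator `T : ℓ₁ → X`
that is a norm-convergent sum of finite-rank operators and satisfies `K ⊆ closure (T B_{ℓ₁})`.
If `X` maps onto `ℓ₁`, the open mapping theorem lifts `B_{ℓ₁}` into a multiple of `B_X`, and the
composition of `T` with the quotient map is the required approximable operator on `X`.
-/

open scoped Pointwise

section Operators

variable {X Y Z : Type*} [NormedAddCommGroup X] [NormedSpace ℝ X]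
  [NormedAddCommGroup Y] [NormedSpace ℝ Y] [NormedAddCommGroup Z] [NormedSpace ℝ Z]

theorem finRankOp_zero : FinRankOp (0 : X →L[ℝ] Y) := by
  unfold FinRankOp
  rw [ContinuousLinearMap.toLinearMap_zero, LinearMap.range_zero]
  infer_instance

theorem FinRankOp.add {u v : X →L[ℝ] Y} (hu : FinRankOp u) (hv : FinRankOp v) :
    FinRankOp (u + v) :=
  have : FiniteDimensional ℝ (LinearMap.range (u : X →ₗ[ℝ] Y)) := hu
  have : FiniteDimensional ℝ (LinearMap.range (v : X →ₗ[ℝ] Y)) := hv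
  Submodule.finiteDimensional_of_le (LinearMap.range_add_le (u : X →ₗ[ℝ] Y) v)

theorem finRankOp_sum {ι : Type*} (s : Finset ι) {u : ι → X →L[ℝ] Y}
    (hu : ∀ i ∈ s, FinRankOp (u i)) : FinRankOp (∑ i ∈ s, u i) :=
  Finset.sum_induction u FinRankOp (fun _ _ => FinRankOp.add) finRankOp_zero hu

theorem finRankOp_smulRight (f : X →L[ℝ] ℝ) (y : Y) : FinRankOp (f.smulRight y) := by
  refine Submodule.finiteDimensional_of_le (S₂ := Submodule.span ℝ {y}) ?_
  rintro _ ⟨x, rfl⟩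
  exact Submodule.smul_mem _ _ (Submodule.mem_span_singleton_self y)

theorem FinRankOp.comp {u : Y →L[ℝ] Z} (hu : FinRankOp u) (s : X →L[ℝ] Y) :
    FinRankOp (u.comp s) :=
  have : FiniteDimensional ℝ (LinearMap.range (u : Y →ₗ[ℝ] Z)) := hu
  Submodule.finiteDimensional_of_le (LinearMap.range_comp_le_range (s : X →ₗ[ℝ] Y) (u : Y →ₗ[ℝ] Z))

theorem ApproxOp.comp {u : Y →L[ℝ] Z} (hu : ApproxOp u) (s : X →L[ℝ] Y) :
    ApproxOp (u.comp s) :=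
  map_mem_closure (f := fun v : Y →L[ℝ] Z => v.comp s)
    ((ContinuousLinearMap.compL ℝ X Y Z).flip s).continuous hu fun _ hv => hv.comp s

theorem ApproxOp.of_hasSum {F : ℕ → X →L[ℝ] Y} {T : X →L[ℝ] Y}
    (hF : ∀ n, FinRankOp (F n)) (hT : HasSum F T) : ApproxOp T :=
  mem_closure_of_tendsto hT.tendsto_sum_nat
    (Eventually.of_forall fun _ => finRankOp_sum _ fun n _ => hF n)

end Operators

theorem lp.sum_norm_le_norm_one {α : Type*} {E : α → Type*} [∀ i, NormedAddCommGroup (E i)]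
    (a : lp E 1) (s : Finset α) : ∑ i ∈ s, ‖a i‖ ≤ ‖a‖ := by
  simpa using lp.sum_rpow_le_norm_rpow (p := 1) (by simp) a s

section BlockOp

variable {X : Type*} [NormedAddCommGroup X] [NormedSpace ℝ X]

noncomputable def blockOp (n : ℕ) {m : ℕ} (y : Fin m → X) : ellOne →L[ℝ] X :=
  ∑ j : Fin m, (lp.evalCLM ℝ (fun _ : ℕ => ℝ) 1 (Nat.pair n j)).smulRight (y j)

variable (n : ℕ) {m : ℕ} (y : Fin m → X)

theorem blockOp_apply (a : ellOne) : blockOp n y a = ∑ j : Fin m, a (Nat.pair n j) • y j := by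
  simp [blockOp, lp.evalCLM, LinearMap.mkContinuous_apply]

theorem finRankOp_blockOp : FinRankOp (blockOp n y) :=
  finRankOp_sum _ fun _ _ => finRankOp_smulRight _ _

theorem norm_blockOp_le {C : ℝ} (hC : 0 ≤ C) (hy : ∀ j, ‖y j‖ ≤ C) : ‖blockOp n y‖ ≤ C := by
  refine ContinuousLinearMap.opNorm_le_bound _ hC fun a => ?_
  have hinj : Set.InjOn (fun j : Fin m => Nat.pair n j) (Finset.univ : Finset (Fin m)) :=
    fun i _ j _ h => Fin.ext (Nat.pair_eq_pair.1 h).2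
  calc ‖blockOp n y a‖ ≤ ∑ j : Fin m, ‖a (Nat.pair n j)‖ * C := by
        rw [blockOp_apply]
        refine (norm_sum_le _ _).trans (Finset.sum_le_sum fun j _ => ?_)
        rw [norm_smul]
        exact mul_le_mul_of_nonneg_left (hy j) (norm_nonneg _)
    _ = (∑ i ∈ Finset.univ.image fun j : Fin m => Nat.pair n j, ‖a i‖) * C := by
        rw [Finset.sum_image hinj, Finset.sum_mul]
    _ ≤ C * ‖a‖ := by
        rw [mul_comm]
        exact mul_le_mul_of_nonneg_left (lp.sum_norm_le_norm_one a _) hC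

theorem blockOp_single_of_ne {n' : ℕ} (h : n ≠ n') (j : ℕ) (t : ℝ) :
    blockOp n y (lp.single 1 (Nat.pair n' j) t) = 0 := by
  rw [blockOp_apply]
  refine Finset.sum_eq_zero fun i _ => ?_
  rw [lp.single_apply_ne _ _ _ fun h' => h (Nat.pair_eq_pair.1 h').1, zero_smul]

theorem blockOp_single (j : Fin m) (t : ℝ) :
    blockOp n y (lp.single 1 (Nat.pair n j) t) = t • y j := by
  rw [blockOp_apply, Finset.sum_eq_single j]
  · rw [lp.single_apply_self]
  · intro i _ hij
    rw [lp.single_apply_ne _ _ _ fun h => hij (Fin.ext (Nat.pair_eq_pair.1 h).2), zero_smul]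
  · simp

end BlockOp

theorem exists_approxOp_subset_image_closedBall {X : Type*} [NormedAddCommGroup X]
    [NormedSpace ℝ X] [CompleteSpace X] {D : ℕ → Set X} (hD : ∀ n, (D n).Finite)
    {c w : ℕ → ℝ} (hc : ∀ n, 0 ≤ c n) (hw : ∀ n, 0 < w n)
    (hDc : ∀ n, D n ⊆ closedBall 0 (c n)) (hcw : Summable fun n => c n / w n) :
    ∃ T : ellOne →L[ℝ] X, ApproxOp T ∧ ∀ n, D n ⊆ T '' closedBall 0 (w n) := by
  choose m y _ hy using fun n => (hD n).fin_param
  set F : ℕ → ellOne →L[ℝ] X := fun n => blockOp n fun j => (w n)⁻¹ • y n j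
  have hF : ∀ n, ‖F n‖ ≤ c n / w n := fun n =>
    norm_blockOp_le n _ (div_nonneg (hc n) (hw n).le) fun j => by
      have hyc : ‖y n j‖ ≤ c n := mem_closedBall_zero_iff.1 (hDc n (hy n ▸ Set.mem_range_self j))
      rw [norm_smul, norm_inv, Real.norm_of_nonneg (hw n).le, inv_mul_eq_div]
      exact div_le_div_of_nonneg_right hyc (hw n).le
  have hT := (Summable.of_norm_bounded hcw hF).hasSum
  refine ⟨∑' n, F n, ApproxOp.of_hasSum (fun n => finRankOp_blockOp _ _) hT, fun n => ?_⟩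
  rw [← hy n]
  rintro _ ⟨j, rfl⟩
  set a : ellOne := lp.single 1 (Nat.pair n j) (w n)
  have hFa : HasSum (fun n' => F n' a) (F n a) :=
    hasSum_single n fun n' h => blockOp_single_of_ne n' _ h _ _
  refine ⟨a, ?_, ?_⟩
  · rw [mem_closedBall_zero_iff, lp.norm_single (by norm_num), Real.norm_of_nonneg (hw n).le]
  · calc (∑' n, F n) a = F n a := (hT.mapL (ContinuousLinearMap.apply ℝ X a)).unique hFa
      _ = y n j := by rw [blockOp_single, smul_smul, mul_inv_cancel₀ (hw n).ne', one_smul]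

theorem TotallyBounded.exists_finite_image_dist_le {X : Type*} [PseudoMetricSpace X]
    {K : Set X} (hK : TotallyBounded K) {ε : ℝ} (hε : 0 < ε) :
    ∃ f : X → X, (f '' K).Finite ∧ ∀ k ∈ K, dist k (f k) ≤ ε := by
  obtain ⟨t, -, ht, hKt⟩ := finite_approx_of_totallyBounded hK ε hε
  have : ∀ k ∈ K, ∃ g ∈ t, dist k g < ε := fun k hk => by simpa using hKt hk
  choose! f hft hf using this
  exact ⟨f, ht.subset (Set.image_subset_iff.2 hft), fun k hk => (hf k hk).le⟩

theorem TotallyBounded.exists_finite_tendsto_sum {X : Type*} [NormedAddCommGroup X]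
    {K : Set X} (hK : TotallyBounded K) {ε : ℕ → ℝ} (hε : ∀ n, 0 < ε n)
    (hε0 : Tendsto ε atTop (𝓝 0)) (hK0 : K ⊆ closedBall 0 (ε 0)) :
    ∃ D : ℕ → Set X, (∀ n, (D n).Finite) ∧ (∀ n, D n ⊆ closedBall 0 (ε n + ε (n + 1))) ∧
      ∀ k ∈ K, ∃ d : ℕ → X, (∀ n, d n ∈ D n) ∧
        Tendsto (fun N => ∑ n ∈ Finset.range N, d n) atTop (𝓝 k) := by
  choose f hf_fin hf using fun n => hK.exists_finite_image_dist_le (hε n)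
  -- the approximations `A n k` of `k` start from `A 0 k = 0`, so that they telescope to `k`
  set A : ℕ → X → X := fun n => if n = 0 then 0 else f n
  have hA0 : A 0 = 0 := if_pos rfl
  have hA_fin : ∀ n, (A n '' K).Finite := by
    rintro (_ | n)
    · exact (Set.finite_singleton 0).subset (by simp [hA0])
    · exact hf_fin (n + 1)
  have hA : ∀ n, ∀ k ∈ K, dist k (A n k) ≤ ε n := by
    rintro (_ | n) k hk
    · simpa [hA0] using hK0 hk
    · exact hf (n + 1) k hk
  refine ⟨fun n => (fun k => A (n + 1) k - A n k) '' K, fun n => ?_, fun n => ?_,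
    fun k hk => ⟨fun n => A (n + 1) k - A n k, fun n => Set.mem_image_of_mem _ hk, ?_⟩⟩
  · refine ((hA_fin (n + 1)).sub (hA_fin n)).subset ?_
    rintro _ ⟨k, hk, rfl⟩
    exact Set.sub_mem_sub (Set.mem_image_of_mem _ hk) (Set.mem_image_of_mem _ hk)
  · rintro _ ⟨k, hk, rfl⟩
    rw [mem_closedBall_zero_iff, ← dist_eq_norm]
    exact (dist_triangle_left _ _ k).trans (add_le_add (hA (n + 1) k hk) (hA n k hk)) |>.trans_eq
      (add_comm _ _)
  · simp_rw [Finset.sum_range_sub (fun n => A n k), hA0, Pi.zero_apply, sub_zero]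
    refine tendsto_iff_dist_tendsto_zero.2 (squeeze_zero (fun _ => dist_nonneg) (fun N => ?_) hε0)
    rw [dist_comm]
    exact hA N k hk

theorem IsCompact.exists_approxOp_subset_closure_image {X : Type*} [NormedAddCommGroup X]
    [NormedSpace ℝ X] [CompleteSpace X] {K : Set X} (hK : IsCompact K) :
    ∃ T : ellOne →L[ℝ] X, ApproxOp T ∧ K ⊆ closure (T '' closedBall 0 1) := by
  obtain ⟨r, hr, hKr⟩ := hK.isBounded.subset_closedBall_lt 0 0
  set ε : ℕ → ℝ := fun n => r * (1 / 4) ^ n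
  obtain ⟨D, hD, hDε, hK_sum⟩ := hK.totallyBounded.exists_finite_tendsto_sum
    (ε := ε) (fun n => by positivity)
    (by simpa using (tendsto_pow_atTop_nhds_zero_of_lt_one (by norm_num) (by norm_num)).const_mul r)
    (by simpa [ε] using hKr)
  -- the radii `2⁻ⁿ⁻¹` sum to `1`, and `D n` shrinks like `4⁻ⁿ`, fast enough for summability
  have hcw :
      (fun n => (ε n + ε (n + 1)) / (1 / 2) ^ (n + 1)) = fun n => 5 / 2 * r * (1 / 2) ^ n := by
    ext n
    have : (1 / 4 : ℝ) ^ n = (1 / 2) ^ n * (1 / 2) ^ n := by rw [← mul_pow]; norm_num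
    simp only [ε, pow_succ, this]
    field_simp
    ring
  obtain ⟨T, hT, hDT⟩ := exists_approxOp_subset_image_closedBall hD (fun n => by positivity)
    (fun n => by positivity) hDε
    (hcw ▸ (summable_geometric_of_lt_one (by norm_num) (by norm_num)).mul_left _)
  refine ⟨T, hT, fun k hk => ?_⟩
  obtain ⟨d, hdD, hdk⟩ := hK_sum k hk
  choose a ha hTa using fun n => hDT n (hdD n)
  refine mem_closure_of_tendsto (b := atTop) (f := fun N => T (∑ n ∈ Finset.range N, a n)) ?_
    (Eventually.of_forall fun N => ⟨_, ?_, rfl⟩)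
  · simpa only [map_sum, hTa] using hdk
  · rw [mem_closedBall_zero_iff]
    calc ‖∑ n ∈ Finset.range N, a n‖ ≤ ∑ n ∈ Finset.range N, (1 / 2 : ℝ) ^ (n + 1) :=
          (norm_sum_le _ _).trans (Finset.sum_le_sum fun n _ => mem_closedBall_zero_iff.1 (ha n))
      _ = (∑ n ∈ Finset.range N, (1 / 2 : ℝ) ^ n) / 2 := by
          simp only [pow_succ, ← Finset.sum_mul]; ring
      _ ≤ 1 := by linarith [sum_geometric_two_le N]

theorem ContinuousLinearMap.exists_closedBall_subset_image_smul {X Y : Type*}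
    [NormedAddCommGroup X] [NormedSpace ℝ X] [CompleteSpace X]
    [NormedAddCommGroup Y] [NormedSpace ℝ Y] [CompleteSpace Y] {S : X →L[ℝ] Y}
    (hS : Surjective S) : ∃ C : ℝ, closedBall (0 : Y) 1 ⊆ (C • S) '' closedBall 0 1 := by
  obtain ⟨C, hC, hlift⟩ := S.exists_preimage_norm_le hS
  refine ⟨C, fun y hy => ?_⟩
  obtain ⟨x, rfl, hx⟩ := hlift y
  refine ⟨C⁻¹ • x, ?_, by simp [smul_smul, hC.ne']⟩
  rw [mem_closedBall_zero_iff] at hy ⊢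
  rw [norm_smul, norm_inv, Real.norm_of_nonneg hC.le, inv_mul_le_iff₀ hC]
  exact hx.trans (by simpa using mul_le_mul_of_nonneg_left hy hC.le)

theorem property_F_of_ellOne_quotient_general
    (X : Type u) [NormedAddCommGroup X] [NormedSpace ℝ X] [CompleteSpace X]
    (Q : Type v) [NormedAddCommGroup Q] [NormedSpace ℝ Q]
    (q : X →L[ℝ] Q) (hq : Surjective q) (e : Q ≃L[ℝ] ellOne) :
    PropertyF X := by
  intro K hK
  obtain ⟨T, hT, hKT⟩ := hK.exists_approxOp_subset_closure_image
  set S : X →L[ℝ] ellOne := (e : Q →L[ℝ] ellOne).comp q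
  obtain ⟨C, hC⟩ := S.exists_closedBall_subset_image_smul (e.surjective.comp hq)
  refine ⟨T.comp (C • S), hT.comp _, hKT.trans (closure_mono ?_)⟩
  rw [ContinuousLinearMap.coe_comp, Set.image_comp]
  exact Set.image_mono hC

/-- Corollary 1: a Banach space admitting a quotient isomorphic to ℓ₁ has property (F̄). -/
theorem property_F_of_ellOne_quotient
    (X : Type u) [NormedAddCommGroup X] [NormedSpace ℝ X] [CompleteSpace X]
    (Q : Type v) [NormedAddCommGroup Q] [NormedSpace ℝ Q] [CompleteSpace Q]
    (q : X →L[ℝ] Q) (hq : Surjective q) (e : Q ≃L[ℝ] ellOne) :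
    PropertyF X :=
  property_F_of_ellOne_quotient_general X Q q hq e
end

section
/- Let X be a real Banach space with property (𝒦) such that every compact operator X → X factors through a real Hilbert space (i.e., for every compact v : X → X there are a real Hilbert space H and bounded operators a : X → H and b : H → X with v = b ∘ a). Then X is isomorphic (linearly homeomorphic) to a Hilbert space. -/
set_option maxSynthPendingDepth 3

open Filter Topology Metric NormedSpace Function

/-- `X` is isomorphic (linearly homeomorphic) to a real Hilbert space. -/
def IsomorphicToHilbert (X : Type u) [NormedAddCommGroup X] [NormedSpace ℝ X] : Prop :=
  ∃ (H : Type u) (_ : NormedAddCommGroup H) (_ : InnerProductSpace ℝ H) (_ : CompleteSpace H),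
    Nonempty (X ≃L[ℝ] H)

/-!
Property (𝒦) and the factorization hypothesis show that every compact `K ⊆ X` lies in
`b (C • B_H)` for some contraction `b` from a Hilbert space `H`: the image of a Hilbert ball
under an operator is closed because the ball is weakly compact. A gliding hump makes `C`
uniform over compact subsets of `B_X`: if `Kₙ ⊆ B_X` needed radius more than `(n + 1)²`,
the compact set `{0} ∪ ⋃ₙ (n + 1)⁻¹ • Kₙ` could not be covered at any radius.

On a finite-dimensional subspace `E`, minimal-norm lifts through `b` are linear, so there is a
linear `T` with `‖x‖ ≤ ‖T x‖ ≤ C ‖x‖` on `E`, and `⟪T x, T y⟫` is a form equivalent to `‖·‖²`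
on `E`. A pointwise ultrafilter limit of these forms over the finite subsets of `X` is an inner
product on `X` whose norm is equivalent to the original one.
-/

open Pointwise

theorem isCompact_insert_iUnion_of_tendsto_smallSets {Y : Type*} [TopologicalSpace Y]
    {K : ℕ → Set Y} {y : Y} (hK : ∀ n, IsCompact (K n))
    (hKy : Tendsto K atTop (𝓝 y).smallSets) : IsCompact (insert y (⋃ n, K n)) := by
  intro l _ hle
  by_cases hy : ClusterPt y l
  · exact ⟨y, Or.inl rfl, hy⟩
  simp only [clusterPt_iff_nonempty, not_forall] at hy
  obtain ⟨s, hs, t, ht, hst⟩ := hy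
  obtain ⟨N, hN⟩ := (tendsto_smallSets_iff.1 hKy s hs).exists_forall_of_atTop
  have hfinite : ⋃ n ∈ Set.Iio N, K n ∈ l := by
    filter_upwards [ht, le_principal_iff.1 hle] with z hzt hz
    rcases hz with rfl | hz
    · exact (hst ⟨z, mem_of_mem_nhds hs, hzt⟩).elim
    obtain ⟨n, hn⟩ := Set.mem_iUnion.1 hz
    exact Set.mem_biUnion (not_le.1 fun hNn => hst ⟨z, hN n hNn hn, hzt⟩) hn
  obtain ⟨z, hz, hzl⟩ := (Set.finite_Iio N).isCompact_biUnion (fun n _ => hK n)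
    (le_principal_iff.2 hfinite)
  exact ⟨z, Or.inr (Set.iUnion₂_subset_iUnion _ _ hz), hzl⟩

section WeakCompactness

variable {H : Type*} [NormedAddCommGroup H] [InnerProductSpace ℝ H] [CompleteSpace H]

-- Banach–Alaoglu in the dual, transported to `H` by the Riesz isomorphism.
theorem isCompact_toWeakSpace_closedBall (r : ℝ) :
    IsCompact (toWeakSpace ℝ H '' closedBall 0 r) := by
  let riesz := InnerProductSpace.toDual ℝ H
  have hcont : Continuous fun φ : WeakDual ℝ H =>
      toWeakSpace ℝ H (riesz.symm (WeakDual.toStrongDual φ)) := by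
    refine WeakBilin.continuous_of_continuous_eval (topDualPairing ℝ H).flip fun f => ?_
    convert WeakDual.eval_continuous (𝕜 := ℝ) (riesz.symm f) using 2 with φ
    change f (riesz.symm (WeakDual.toStrongDual φ)) = WeakDual.toStrongDual φ (riesz.symm f)
    rw [← InnerProductSpace.toDual_symm_apply, ← InnerProductSpace.toDual_symm_apply,
      real_inner_comm]
  convert (WeakDual.isCompact_closedBall (𝕜 := ℝ) (E := H) 0 r).image hcont using 1
  ext x
  constructor
  · rintro ⟨y, hy, rfl⟩
    refine ⟨StrongDual.toWeakDual (riesz y), ?_, by simp⟩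
    simpa using hy
  · rintro ⟨φ, hφ, rfl⟩
    exact ⟨_, by simpa using hφ, rfl⟩

theorem ContinuousLinearMap.isClosed_image_closedBall {X : Type*} [NormedAddCommGroup X]
    [NormedSpace ℝ X] (b : H →L[ℝ] X) (r : ℝ) : IsClosed (b '' closedBall 0 r) := by
  have hweak : IsClosed (WeakSpace.map b '' (toWeakSpace ℝ H '' closedBall 0 r)) :=
    ((isCompact_toWeakSpace_closedBall r).image (WeakSpace.map b).continuous).isClosed
  rw [Set.image_image] at hweak
  exact hweak.preimage (toWeakSpaceCLM ℝ X).continuous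

end WeakCompactness

theorem ContinuousLinearMap.exists_minimal_linear_lift {𝕜 H X : Type*} [RCLike 𝕜]
    [NormedAddCommGroup H] [InnerProductSpace 𝕜 H] [CompleteSpace H]
    [NormedAddCommGroup X] [NormedSpace 𝕜 X] (b : H →L[𝕜] X) {E : Submodule 𝕜 X}
    (hE : E ≤ b.range) :
    ∃ T : X →ₗ[𝕜] H, ∀ x ∈ E, b (T x) = x ∧ ∀ z, b z = x → ‖T x‖ ≤ ‖z‖ := by
  set P := b.kerᗮ.starProjection
  have hbP : ∀ h, b (P h) = b h := fun h => by
    have hker : b (b.ker.starProjection h) = 0 := b.ker.starProjection_apply_mem h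
    simpa [P, Submodule.starProjection_orthogonal, sub_eq_zero] using hker
  have hPker : ∀ h h', b h = b h' → P h = P h' := fun h h' hhh' => by
    rw [← sub_eq_zero, ← map_sub, Submodule.starProjection_apply_eq_zero_iff]
    exact b.ker.le_orthogonal_orthogonal (by simp [hhh'])
  obtain ⟨g, hg⟩ := (b : H →ₗ[𝕜] X).rangeRestrict.exists_rightInverse_of_surjective
    (LinearMap.range_rangeRestrict _)
  obtain ⟨S, hS⟩ := LinearMap.exists_extend (g ∘ₗ Submodule.inclusion hE)
  have hbS : ∀ x ∈ E, b (S x) = x := fun x hx => by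
    rw [show S x = g ⟨x, hE hx⟩ from LinearMap.congr_fun hS ⟨x, hx⟩]
    exact congr($(LinearMap.congr_fun hg ⟨x, hE hx⟩).1)
  refine ⟨(P : H →ₗ[𝕜] H) ∘ₗ S, fun x hx => ⟨(hbP _).trans (hbS x hx), fun z hz => ?_⟩⟩
  calc ‖P (S x)‖ = ‖P z‖ := by rw [hPker _ _ ((hbS x hx).trans hz.symm)]
    _ ≤ ‖z‖ := Submodule.norm_starProjection_apply_le _ z

theorem LinearMap.BilinForm.exists_tendsto_ultrafilter {ι M : Type*} [AddCommGroup M]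
    [Module ℝ M] {l : Filter ι} [l.NeBot] (B : ι → LinearMap.BilinForm ℝ M)
    (hB : ∀ x y, ∃ c, ∀ᶠ i in l, |B i x y| ≤ c) :
    ∃ (U : Ultrafilter ι) (Φ : LinearMap.BilinForm ℝ M),
      ↑U ≤ l ∧ ∀ x y, Tendsto (fun i => B i x y) U (𝓝 (Φ x y)) := by
  let U := Ultrafilter.of l
  have hlim : ∀ x y, ∃ r, Tendsto (fun i => B i x y) U (𝓝 r) := fun x y => by
    obtain ⟨c, hc⟩ := hB x y
    obtain ⟨r, -, hr⟩ := isCompact_Icc.ultrafilter_le_nhds (U.map fun i => B i x y) <|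
      le_principal_iff.2 <| Ultrafilter.of_le l <| hc.mono fun i => abs_le.1
    exact ⟨r, hr⟩
  choose φ hφ using hlim
  refine ⟨U, LinearMap.mk₂ ℝ φ ?_ ?_ ?_ ?_, Ultrafilter.of_le l, hφ⟩
  · exact fun x x' y => tendsto_nhds_unique (hφ _ _) <| by simpa using (hφ x y).add (hφ x' y)
  · exact fun c x y => tendsto_nhds_unique (hφ _ _) <| by simpa using (hφ x y).const_mul c
  · exact fun x y y' => tendsto_nhds_unique (hφ _ _) <| by simpa using (hφ x y).add (hφ x y')
  · exact fun c x y => tendsto_nhds_unique (hφ _ _) <| by simpa using (hφ x y).const_mul c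

def HilbertCopy (X : Type u) : Type u := X

theorem isomorphicToHilbert_of_bilinForm {X : Type u} [NormedAddCommGroup X] [NormedSpace ℝ X]
    [CompleteSpace X] (Φ : LinearMap.BilinForm ℝ X) (hsymm : ∀ x y, Φ x y = Φ y x) {C : ℝ}
    (hlow : ∀ x, ‖x‖ ^ 2 ≤ Φ x x) (hup : ∀ x, Φ x x ≤ C * ‖x‖ ^ 2) :
    IsomorphicToHilbert X := by
  let : AddCommGroup (HilbertCopy X) := inferInstanceAs (AddCommGroup X)
  let : Module ℝ (HilbertCopy X) := inferInstanceAs (Module ℝ X)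
  let core : InnerProductSpace.Core ℝ (HilbertCopy X) :=
    { inner := fun x y => Φ x y
      conj_inner_symm := fun x y => hsymm y x
      re_inner_nonneg := fun x => (sq_nonneg _).trans (hlow x)
      add_left := fun x y z => LinearMap.map_add₂ Φ x y z
      smul_left := fun x y r => by rw [conj_trivial]; exact LinearMap.map_smul₂ Φ r x y
      definite := fun x hx => norm_eq_zero.1 <| pow_eq_zero_iff (n := 2) two_ne_zero |>.1 <|
        le_antisymm ((hlow x).trans_eq hx) (sq_nonneg _) }
  let : NormedAddCommGroup (HilbertCopy X) := core.toNormedAddCommGroup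
  let : InnerProductSpace ℝ (HilbertCopy X) := InnerProductSpace.ofCore core.toCore
  let ℓ : X ≃ₗ[ℝ] HilbertCopy X := LinearEquiv.refl ℝ X
  let e : X ≃L[ℝ] HilbertCopy X := ℓ.toContinuousLinearEquivOfBounds √C 1
    (fun x => show √(Φ x x) ≤ √C * ‖x‖ by
      rw [← Real.sqrt_sq (norm_nonneg x), ← Real.sqrt_mul' _ (sq_nonneg _)]
      exact Real.sqrt_le_sqrt (hup x))
    (fun x => by
      rw [one_mul]
      exact Real.le_sqrt_of_sq_le (hlow (ℓ.symm x)))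
  have : CompleteSpace (HilbertCopy X) :=
    (e.isUniformEmbedding.isUniformInducing.completeSpace_congr e.surjective).1 ‹_›
  exact ⟨HilbertCopy X, _, _, this, ⟨e⟩⟩

def CoveredByHilbertBall {X : Type u} [NormedAddCommGroup X] [NormedSpace ℝ X]
    (K : Set X) (C : ℝ) : Prop :=
  ∃ (H : Type u) (_ : NormedAddCommGroup H) (_ : InnerProductSpace ℝ H) (_ : CompleteSpace H)
    (b : H →L[ℝ] X), ‖b‖ ≤ 1 ∧ K ⊆ b '' closedBall 0 C

namespace CoveredByHilbertBall

variable {X : Type u} [NormedAddCommGroup X] [NormedSpace ℝ X] {K L : Set X} {C D : ℝ}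

theorem of_subset_image {H : Type u} [NormedAddCommGroup H] [InnerProductSpace ℝ H]
    [CompleteSpace H] (b : H →L[ℝ] X) (hb : ‖b‖ ≤ 1) (hK : K ⊆ b '' closedBall 0 C) :
    CoveredByHilbertBall K C :=
  ⟨H, inferInstance, inferInstance, inferInstance, b, hb, hK⟩

theorem mono (h : CoveredByHilbertBall K C) (hLK : L ⊆ K) (hCD : C ≤ D) :
    CoveredByHilbertBall L D := by
  obtain ⟨H, _, _, _, b, hb, hK⟩ := h
  exact of_subset_image b hb <| hLK.trans <| hK.trans <| Set.image_mono <|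
    closedBall_subset_closedBall hCD

theorem of_smul {c : ℝ} (h : CoveredByHilbertBall (c • K) C) (hc : c ≠ 0) :
    CoveredByHilbertBall K (‖c‖⁻¹ * C) := by
  obtain ⟨H, _, _, _, b, hb, hK⟩ := h
  refine of_subset_image b hb ?_
  calc K = c⁻¹ • c • K := (inv_smul_smul₀ hc K).symm
    _ ⊆ c⁻¹ • b '' closedBall 0 C := Set.smul_set_mono hK
    _ = b '' closedBall 0 (‖c‖⁻¹ * C) := by
      rw [← image_smul_set, smul_closedBall' (inv_ne_zero hc), smul_zero, norm_inv]

theorem image_closedBall {H : Type u} [NormedAddCommGroup H] [InnerProductSpace ℝ H]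
    [CompleteSpace H] (b : H →L[ℝ] X) (r : ℝ) :
    CoveredByHilbertBall (b '' closedBall 0 r) ((‖b‖ + 1) * r) := by
  have hc : 0 < ‖b‖ + 1 := by positivity
  refine of_subset_image ((‖b‖ + 1)⁻¹ • b) ?_ ?_
  · rw [norm_smul, norm_inv, Real.norm_of_nonneg hc.le, inv_mul_le_one₀ hc]
    exact le_add_of_nonneg_right zero_le_one
  · rintro _ ⟨z, hz, rfl⟩
    refine ⟨(‖b‖ + 1) • z, ?_, ?_⟩
    · rw [mem_closedBall_zero_iff, norm_smul, Real.norm_of_nonneg hc.le]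
      exact mul_le_mul_of_nonneg_left (mem_closedBall_zero_iff.1 hz) hc.le
    · simp [smul_smul, mul_inv_cancel₀ hc.ne']

theorem exists_bilinForm {E : Submodule ℝ X}
    (h : CoveredByHilbertBall (((↑) : E → X) '' closedBall 0 1) C) :
    ∃ B : LinearMap.BilinForm ℝ X, (∀ x y, B x y = B y x) ∧
      (∀ x ∈ E, ∀ y ∈ E, |B x y| ≤ C ^ 2 * (‖x‖ * ‖y‖)) ∧ ∀ x ∈ E, ‖x‖ ^ 2 ≤ B x x := by
  obtain ⟨H, _, _, _, b, hb, hcov⟩ := h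
  have hlift : ∀ x ∈ E, ∃ z, b z = x ∧ ‖z‖ ≤ C * ‖x‖ := fun x hx => by
    rcases eq_or_ne x 0 with rfl | hx0
    · exact ⟨0, map_zero b, by simp⟩
    have hx' : ‖x‖ ≠ 0 := norm_ne_zero_iff.2 hx0
    obtain ⟨z, hz, hbz⟩ := hcov ⟨⟨‖x‖⁻¹ • x, E.smul_mem _ hx⟩, by simp [norm_smul, hx'], rfl⟩
    refine ⟨‖x‖ • z, by simp [hbz, smul_smul, hx'], ?_⟩
    rw [norm_smul, norm_norm, mul_comm]
    exact mul_le_mul_of_nonneg_right (mem_closedBall_zero_iff.1 hz) (norm_nonneg x)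
  obtain ⟨T, hT⟩ := b.exists_minimal_linear_lift (E := E) fun x hx =>
    (hlift x hx).imp fun _ => And.left
  have hTle : ∀ x ∈ E, ‖T x‖ ≤ C * ‖x‖ := fun x hx => by
    obtain ⟨z, hbz, hz⟩ := hlift x hx
    exact ((hT x hx).2 z hbz).trans hz
  have hTge : ∀ x ∈ E, ‖x‖ ≤ ‖T x‖ := fun x hx =>
    calc ‖x‖ = ‖b (T x)‖ := by rw [(hT x hx).1]
      _ ≤ ‖b‖ * ‖T x‖ := b.le_opNorm _
      _ ≤ ‖T x‖ := mul_le_of_le_one_left (norm_nonneg _) hb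
  refine ⟨(innerₗ H).compl₁₂ T T, fun x y => real_inner_comm _ _, fun x hx y hy => ?_,
    fun x hx => ?_⟩
  · calc |inner ℝ (T x) (T y)| ≤ ‖T x‖ * ‖T y‖ := abs_real_inner_le_norm _ _
      _ ≤ (C * ‖x‖) * (C * ‖y‖) :=
        mul_le_mul (hTle x hx) (hTle y hy) (norm_nonneg _) ((norm_nonneg _).trans (hTle x hx))
      _ = C ^ 2 * (‖x‖ * ‖y‖) := by ring
  · calc ‖x‖ ^ 2 ≤ ‖T x‖ ^ 2 := pow_le_pow_left₀ (norm_nonneg x) (hTge x hx) 2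
      _ = inner ℝ (T x) (T x) := (real_inner_self_eq_norm_sq _).symm

end CoveredByHilbertBall

section Uniform

variable {X : Type u} [NormedAddCommGroup X] [NormedSpace ℝ X]

theorem exists_coveredByHilbertBall_of_propertyK (hX : PropertyK X)
    (h : ∀ v : X →L[ℝ] X, CompactOp v →
      ∃ (H : Type u) (_ : NormedAddCommGroup H) (_ : InnerProductSpace ℝ H)
        (_ : CompleteSpace H) (a : X →L[ℝ] H) (b : H →L[ℝ] X), v = b.comp a)
    {K : Set X} (hK : IsCompact K) : ∃ C, CoveredByHilbertBall K C := by
  obtain ⟨v, hv, hKv⟩ := hX K hK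
  obtain ⟨H, _, _, _, a, b, rfl⟩ := h v hv
  have himage : b.comp a '' closedBall 0 1 ⊆ b '' closedBall 0 ‖a‖ := by
    rintro _ ⟨z, hz, rfl⟩
    exact ⟨a z, by simpa using a.le_opNorm_of_le (mem_closedBall_zero_iff.1 hz), rfl⟩
  exact ⟨_, (CoveredByHilbertBall.image_closedBall b ‖a‖).mono
    (hKv.trans (closure_minimal himage (b.isClosed_image_closedBall _))) le_rfl⟩

theorem exists_forall_coveredByHilbertBall
    (hcov : ∀ K : Set X, IsCompact K → ∃ C, CoveredByHilbertBall K C) :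
    ∃ C, ∀ K : Set X, IsCompact K → K ⊆ closedBall 0 1 → CoveredByHilbertBall K C := by
  by_contra! hcon
  choose K hKc hKB hKnot using fun n : ℕ => hcon (((n : ℝ) + 1) ^ 2)
  set c : ℕ → ℝ := fun n => 1 / ((n : ℝ) + 1) with hc
  have hc0 : ∀ n, 0 < c n := fun n => by positivity
  have hsmall : Tendsto (fun n => c n • K n) atTop (𝓝 0).smallSets := by
    refine ((tendsto_closedBall_smallSets 0).comp tendsto_one_div_add_atTop_nhds_zero_nat
      ).smallSets_mono (Eventually.of_forall fun n => ?_)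
    calc c n • K n ⊆ c n • closedBall 0 1 := Set.smul_set_mono (hKB n)
      _ = closedBall 0 (c n) := by
        rw [_root_.smul_closedBall _ _ zero_le_one, smul_zero, mul_one,
          Real.norm_of_nonneg (hc0 n).le]
  obtain ⟨r, hr⟩ := hcov _ <|
    isCompact_insert_iUnion_of_tendsto_smallSets (fun n => (hKc n).smul (c n)) hsmall
  obtain ⟨n, hn⟩ := exists_nat_ge r
  have hKn := (hr.mono ((Set.subset_iUnion (fun n => c n • K n) n).trans
    (Set.subset_insert _ _)) le_rfl).of_smul (hc0 n).ne'
  refine hKnot n (hKn.mono subset_rfl ?_)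
  rw [Real.norm_of_nonneg (hc0 n).le]
  simp only [hc, one_div, inv_inv, sq]
  gcongr
  linarith

end Uniform

/-- Proposition 3 for 𝒦: if `X` has property (𝒦) and every compact operator `X → X` factors
through a real Hilbert space, then `X` is isomorphic to a Hilbert space. -/
theorem isomorphicToHilbert_of_property_K (X : Type u) [NormedAddCommGroup X]
    [NormedSpace ℝ X] [CompleteSpace X] (hX : PropertyK X)
    (h : ∀ v : X →L[ℝ] X, CompactOp v →
      ∃ (H : Type u) (_ : NormedAddCommGroup H) (_ : InnerProductSpace ℝ H)
        (_ : CompleteSpace H) (a : X →L[ℝ] H) (b : H →L[ℝ] X), v = b.comp a) :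
    IsomorphicToHilbert X := by
  obtain ⟨C, hC⟩ := exists_forall_coveredByHilbertBall fun K hK =>
    exists_coveredByHilbertBall_of_propertyK hX h hK
  have hball : ∀ F : Finset X, CoveredByHilbertBall
      (((↑) : Submodule.span ℝ (F : Set X) → X) '' closedBall 0 1) C := fun F =>
    hC _ ((isCompact_closedBall 0 1).image continuous_subtype_val) <| by
      rintro _ ⟨x, hx, rfl⟩
      simpa using hx
  choose B hsymm hbound hlow using fun F => (hball F).exists_bilinForm
  have hspan : ∀ x : X, ∀ᶠ F : Finset X in atTop, x ∈ Submodule.span ℝ (F : Set X) := fun x =>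
    (eventually_ge_atTop {x}).mono fun F hF =>
      Submodule.subset_span (hF (Finset.mem_singleton_self x))
  obtain ⟨U, Φ, hU, hΦ⟩ := LinearMap.BilinForm.exists_tendsto_ultrafilter B fun x y =>
    ⟨_, ((hspan x).and (hspan y)).mono fun F hF => hbound F x hF.1 y hF.2⟩
  refine isomorphicToHilbert_of_bilinForm Φ
    (fun x y => tendsto_nhds_unique (hΦ x y) ((hΦ y x).congr fun F => hsymm F y x))
    (C := C ^ 2) (fun x => ge_of_tendsto (hΦ x x) ?_) (fun x => le_of_tendsto (hΦ x x) ?_)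
  · exact ((hspan x).filter_mono hU).mono fun F hF => hlow F x hF
  · refine ((hspan x).filter_mono hU).mono fun F hF => ?_
    simpa [sq] using (le_abs_self _).trans (hbound F x hF x hF)
end

section
/- Let X be a real Banach space with property (F̄) such that every approximable operator X → X factors through a real Hilbert space (i.e., for every approximable v : X → X there are a real Hilbert space H and bounded operators a : X → H and b : H → X with v = b ∘ a). Then X is isomorphic (linearly homeomorphic) to a Hilbert space. -/
set_option maxSynthPendingDepth 3

open Filter Topology Metric NormedSpace Function

/-!
Factor an approximable `v = b ∘ a` through a Hilbert space `H`. On the dual `X*` the form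
`‖a‖² ⟪b* f, b* g⟫` (with `b* : X* → H* ≅ H`) is bounded and dominates `f(x)²` for every `x`
in the closure of `v(B_X)`, so by property (F̄) every compact set is dominated by a bounded
form. The bound is uniform over finite subsets of `B_X`: otherwise put finite sets `Fₖ` that
need constants `> 4ᵏ k` into the single compact set `{0} ∪ ⋃ₖ 2⁻ᵏ Fₖ`. An ultrafilter limit
then yields a bounded form `B` on `X*` with `‖f‖² ≤ B(f, f)`, so `X*` is isomorphic to a
Hilbert space `H`, and `X`, embedded isomorphically in `X** ≅ H* ≅ H`, to a closed subspace
of `H`.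
-/

open scoped Pointwise

universe u

theorem isCompact_insert_zero_iUnion_smul {E : Type*} [SeminormedAddCommGroup E]
    [NormedSpace ℝ E] {s : ℕ → Set E} (hfin : ∀ k, (s k).Finite)
    (hball : ∀ k, s k ⊆ closedBall 0 1) :
    IsCompact (insert 0 (⋃ k, (1 / 2 : ℝ) ^ k • s k)) := by
  have : ∀ k, Finite (s k) := fun k => (hfin k).to_subtype
  set g : (Σ k, s k) → E := fun i => (1 / 2 : ℝ) ^ i.1 • (i.2 : E)
  have hfst : Tendsto (fun i : Σ k, s k => i.1) cofinite atTop := by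
    rw [← Nat.cofinite_eq_atTop]
    refine Tendsto.cofinite_of_finite_preimage_singleton fun k => ?_
    refine ((Set.finite_range (Sigma.mk k)).subset ?_).to_subtype
    rintro ⟨j, x⟩ rfl
    exact ⟨x, rfl⟩
  have hg : Tendsto g cofinite (𝓝 0) := by
    refine squeeze_zero_norm (fun i => ?_) <|
      (tendsto_pow_atTop_nhds_zero_of_lt_one (r := (1 / 2 : ℝ)) (by norm_num) (by norm_num)).comp
        hfst
    calc ‖g i‖ = (1 / 2) ^ i.1 * ‖(i.2 : E)‖ := by simp [g, norm_smul]
      _ ≤ (1 / 2) ^ i.1 := mul_le_of_le_one_right (by positivity)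
        (mem_closedBall_zero_iff.1 (hball i.1 i.2.2))
  convert hg.isCompact_insert_range_of_cofinite using 2
  ext x
  simp [g, Set.mem_smul_set]

structure BoundedForm (E : Type*) [SeminormedAddCommGroup E] [NormedSpace ℝ E] (C : ℝ) where
  toFun : E → E → ℝ
  symm : ∀ f g, toFun f g = toFun g f
  add_left : ∀ f f' g, toFun (f + f') g = toFun f g + toFun f' g
  smul_left : ∀ (c : ℝ) (f g), toFun (c • f) g = c * toFun f g
  nonneg : ∀ f, 0 ≤ toFun f f
  bound : ∀ f g, |toFun f g| ≤ C * (‖f‖ * ‖g‖)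

namespace BoundedForm

variable {E : Type*} [SeminormedAddCommGroup E] [NormedSpace ℝ E] {C : ℝ}

instance : CoeFun (BoundedForm E C) (fun _ => E → E → ℝ) := ⟨toFun⟩

def mono (B : BoundedForm E C) {C' : ℝ} (hC : C ≤ C') : BoundedForm E C' where
  __ := B
  bound f g := (B.bound f g).trans (by gcongr)

def smul (c : ℝ) (hc : 0 ≤ c) (B : BoundedForm E C) : BoundedForm E (c * C) where
  toFun f g := c * B f g
  symm f g := by rw [B.symm]
  add_left f f' g := by rw [B.add_left, mul_add]
  smul_left a f g := by rw [B.smul_left]; ring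
  nonneg f := mul_nonneg hc (B.nonneg f)
  bound f g := by
    rw [abs_mul, abs_of_nonneg hc, mul_assoc]
    exact mul_le_mul_of_nonneg_left (B.bound f g) hc

def ofInner {H : Type*} [NormedAddCommGroup H] [InnerProductSpace ℝ H] (T : E →L[ℝ] H) :
    BoundedForm E (‖T‖ ^ 2) where
  toFun f g := inner ℝ (T f) (T g)
  symm f g := real_inner_comm _ _
  add_left f f' g := by rw [map_add, inner_add_left]
  smul_left c f g := by rw [map_smul, real_inner_smul_left]
  nonneg f := real_inner_self_nonneg
  bound f g := calc
    |inner ℝ (T f) (T g)| ≤ ‖T f‖ * ‖T g‖ := abs_real_inner_le_norm _ _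
    _ ≤ (‖T‖ * ‖f‖) * (‖T‖ * ‖g‖) := by gcongr <;> exact T.le_opNorm _
    _ = ‖T‖ ^ 2 * (‖f‖ * ‖g‖) := by ring

section limit

variable {ι : Type*} (U : Ultrafilter ι) (B : ι → BoundedForm E C)

theorem tendsto_limUnder (f g : E) :
    Tendsto (fun i => B i f g) U (𝓝 (limUnder (U : Filter ι) fun i => B i f g)) := by
  have hmem : ∀ i, B i f g ∈ Set.Icc (-(C * (‖f‖ * ‖g‖))) (C * (‖f‖ * ‖g‖)) :=
    fun i => abs_le.1 ((B i).bound f g)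
  obtain ⟨a, -, ha⟩ := isCompact_Icc.ultrafilter_le_nhds (U.map fun i => B i f g)
    (le_principal_iff.2 (Ultrafilter.mem_map.2 (univ_mem' hmem)))
  exact tendsto_nhds_limUnder ⟨a, ha⟩

noncomputable def limit : BoundedForm E C where
  toFun f g := limUnder (U : Filter ι) fun i => B i f g
  symm f g := by simp_rw [(B _).symm f g]
  add_left f f' g := tendsto_nhds_unique (tendsto_limUnder U B _ _) <| by
    simpa only [(B _).add_left] using (tendsto_limUnder U B f g).add (tendsto_limUnder U B f' g)
  smul_left c f g := tendsto_nhds_unique (tendsto_limUnder U B _ _) <| by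
    simpa only [(B _).smul_left] using (tendsto_limUnder U B f g).const_mul c
  nonneg f := ge_of_tendsto' (tendsto_limUnder U B f f) fun i => (B i).nonneg f
  bound f g := abs_le.2
    ⟨ge_of_tendsto' (tendsto_limUnder U B f g) fun i => (abs_le.1 ((B i).bound f g)).1,
      le_of_tendsto' (tendsto_limUnder U B f g) fun i => (abs_le.1 ((B i).bound f g)).2⟩

theorem tendsto_limit (f g : E) : Tendsto (fun i => B i f g) U (𝓝 (limit U B f g)) :=
  tendsto_limUnder U B f g

end limit

end BoundedForm

section Riesz

variable {H Y : Type*} [NormedAddCommGroup H] [InnerProductSpace ℝ H] [CompleteSpace H]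
  [NormedAddCommGroup Y] [NormedSpace ℝ Y]

/-- The Banach-space adjoint `Y* → H* ≅ H` of `b`, composed with the Riesz isomorphism. -/
noncomputable def rieszAdjoint (b : H →L[ℝ] Y) : StrongDual ℝ Y →L[ℝ] H :=
  LinearMap.mkContinuous
    { toFun f := (InnerProductSpace.toDual ℝ H).symm (f ∘L b)
      map_add' f g := by simp [ContinuousLinearMap.add_comp]
      map_smul' c f := by simp [ContinuousLinearMap.smul_comp] } ‖b‖ fun f => by
    simpa [mul_comm] using f.opNorm_comp_le b

theorem inner_rieszAdjoint_apply (b : H →L[ℝ] Y) (f : StrongDual ℝ Y) (w : H) :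
    inner ℝ (rieszAdjoint b f) w = f (b w) :=
  InnerProductSpace.toDual_symm_apply

theorem norm_rieszAdjoint_le (b : H →L[ℝ] Y) : ‖rieszAdjoint b‖ ≤ ‖b‖ :=
  LinearMap.mkContinuous_norm_le _ (norm_nonneg b) _

end Riesz

section Domination

variable {X : Type*} [NormedAddCommGroup X] [NormedSpace ℝ X]

def HasDominatingForm (s : Set X) (C : ℝ) : Prop :=
  ∃ B : BoundedForm (StrongDual ℝ X) C, ∀ x ∈ s, ∀ f : StrongDual ℝ X, f x ^ 2 ≤ B f f

namespace HasDominatingForm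

variable {s t : Set X} {C : ℝ}

theorem mono_set (h : HasDominatingForm s C) (hts : t ⊆ s) : HasDominatingForm t C :=
  let ⟨B, hB⟩ := h
  ⟨B, fun x hx => hB x (hts hx)⟩

theorem mono (h : HasDominatingForm s C) {C' : ℝ} (hC : C ≤ C') : HasDominatingForm s C' :=
  let ⟨B, hB⟩ := h
  ⟨B.mono hC, hB⟩

theorem smul_set (h : HasDominatingForm s C) (c : ℝ) :
    HasDominatingForm (c • s) (c ^ 2 * C) := by
  obtain ⟨B, hB⟩ := h
  refine ⟨B.smul (c ^ 2) (sq_nonneg c), ?_⟩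
  rintro _ ⟨x, hx, rfl⟩ f
  rw [map_smul, smul_eq_mul, mul_pow]
  exact mul_le_mul_of_nonneg_left (hB x hx f) (sq_nonneg c)

end HasDominatingForm

theorem hasDominatingForm_closure_image_closedBall {H : Type*} [NormedAddCommGroup H]
    [InnerProductSpace ℝ H] [CompleteSpace H] (a : X →L[ℝ] H) (b : H →L[ℝ] X) :
    HasDominatingForm (closure ((b ∘L a) '' closedBall 0 1)) (‖a‖ ^ 2 * ‖b‖ ^ 2) := by
  set T := rieszAdjoint b
  have hTnorm : ‖T‖ ≤ ‖b‖ := norm_rieszAdjoint_le b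
  refine ⟨((BoundedForm.ofInner T).mono (pow_le_pow_left₀ (norm_nonneg T) hTnorm 2)).smul
    (‖a‖ ^ 2) (sq_nonneg _), fun x hx f => ?_⟩
  have hclosed : IsClosed {z : X | f z ^ 2 ≤ ‖a‖ ^ 2 * ‖T f‖ ^ 2} :=
    isClosed_le (by fun_prop) continuous_const
  have himage : (b ∘L a) '' closedBall 0 1 ⊆ {z : X | f z ^ 2 ≤ ‖a‖ ^ 2 * ‖T f‖ ^ 2} := by
    rintro _ ⟨y, hy, rfl⟩
    have hay : ‖a y‖ ≤ ‖a‖ := by simpa using a.le_opNorm_of_le (mem_closedBall_zero_iff.1 hy)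
    calc f (b (a y)) ^ 2 = inner ℝ (T f) (a y) ^ 2 := by rw [inner_rieszAdjoint_apply]
      _ ≤ (‖T f‖ * ‖a y‖) ^ 2 := by rw [← sq_abs]; gcongr; exact abs_real_inner_le_norm _ _
      _ ≤ (‖T f‖ * ‖a‖) ^ 2 := by gcongr
      _ = ‖a‖ ^ 2 * ‖T f‖ ^ 2 := by ring
  show f x ^ 2 ≤ ‖a‖ ^ 2 * inner ℝ (T f) (T f)
  rw [real_inner_self_eq_norm_sq]
  exact closure_minimal himage hclosed hx

end Domination

section Uniformity

variable {X : Type*} [NormedAddCommGroup X] [NormedSpace ℝ X]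

theorem exists_forall_finite_hasDominatingForm
    (hK : ∀ K : Set X, IsCompact K → ∃ C, HasDominatingForm K C) :
    ∃ C, ∀ s : Set X, s.Finite → s ⊆ closedBall 0 1 → HasDominatingForm s C := by
  by_contra! hbad
  choose s hfin hball hnot using fun k : ℕ => hbad (4 ^ k * k)
  obtain ⟨C, hC⟩ := hK _ (isCompact_insert_zero_iUnion_smul hfin hball)
  set k := ⌈C⌉₊
  have hk := (hC.mono_set ((Set.subset_iUnion _ k).trans (Set.subset_insert _ _))).smul_set
    (2 ^ k)
  rw [smul_smul, ← mul_pow, show (2 : ℝ) * (1 / 2) = 1 by norm_num, one_pow, one_smul,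
    ← pow_mul, pow_mul', show (2 : ℝ) ^ 2 = 4 by norm_num] at hk
  exact hnot k (hk.mono (by gcongr; exact Nat.le_ceil C))

theorem hasDominatingForm_of_forall_finite {t : Set X} {C : ℝ}
    (h : ∀ s ⊆ t, s.Finite → HasDominatingForm s C) : HasDominatingForm t C := by
  choose B hB using fun F : Finset X =>
    h (↑F ∩ t) Set.inter_subset_right (F.finite_toSet.inter_of_left t)
  let U : Ultrafilter (Finset X) := .of atTop
  refine ⟨BoundedForm.limit U B, fun x hx f =>
    ge_of_tendsto (BoundedForm.tendsto_limit U B f f) ?_⟩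
  filter_upwards [Ultrafilter.of_le atTop (eventually_ge_atTop {x})] with F hF
  exact hB F x ⟨hF (Finset.mem_singleton_self x), hx⟩ f

end Uniformity

structure CoerciveForm (E : Type*) [SeminormedAddCommGroup E] [NormedSpace ℝ E] (C : ℝ)
    extends BoundedForm E C where
  sq_norm_le : ∀ f, ‖f‖ ^ 2 ≤ toFun f f

namespace CoerciveForm

variable {E : Type*} [NormedAddCommGroup E] [NormedSpace ℝ E] {C : ℝ} (B : CoerciveForm E C)

/-- A copy of `E` carrying the inner product `B`, whose norm is equivalent to that of `E`. -/
def Space (_B : CoerciveForm E C) : Type _ := E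

instance : AddCommGroup B.Space := inferInstanceAs (AddCommGroup E)

instance : Module ℝ B.Space := inferInstanceAs (Module ℝ E)

def toSpace : E ≃ₗ[ℝ] B.Space := LinearEquiv.refl ℝ E

noncomputable abbrev innerCore : InnerProductSpace.Core ℝ B.Space where
  inner f g := B.toFun f g
  conj_inner_symm f g := B.symm g f
  re_inner_nonneg f := B.nonneg f
  definite f hf := norm_eq_zero.1 <| pow_eq_zero_iff two_ne_zero |>.1 <|
    le_antisymm (hf ▸ B.sq_norm_le f) (sq_nonneg _)
  add_left := B.add_left
  smul_left f g r := B.smul_left r f g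

noncomputable instance : NormedAddCommGroup B.Space := B.innerCore.toNormedAddCommGroup

noncomputable instance : InnerProductSpace ℝ B.Space := .ofCore B.innerCore.toCore

theorem norm_toSpace_sq (f : E) : ‖B.toSpace f‖ ^ 2 = B.toFun f f := by
  rw [← real_inner_self_eq_norm_sq]
  rfl

theorem norm_le_norm_toSpace (f : E) : ‖f‖ ≤ ‖B.toSpace f‖ :=
  pow_le_pow_iff_left₀ (norm_nonneg _) (norm_nonneg _) two_ne_zero |>.1 <|
    B.norm_toSpace_sq f ▸ B.sq_norm_le f

theorem norm_toSpace_le (f : E) : ‖B.toSpace f‖ ≤ √C * ‖f‖ := by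
  rw [← Real.sqrt_sq (norm_nonneg _), ← Real.sqrt_sq (norm_nonneg f),
    ← Real.sqrt_mul' _ (sq_nonneg _)]
  gcongr
  rw [norm_toSpace_sq, sq]
  exact (le_abs_self _).trans (B.bound f f)

noncomputable def toSpaceCLE : E ≃L[ℝ] B.Space :=
  B.toSpace.toContinuousLinearEquivOfBounds √C 1 B.norm_toSpace_le fun f => by
    simpa using B.norm_le_norm_toSpace (B.toSpace.symm f)

instance [CompleteSpace E] : CompleteSpace B.Space :=
  (completeSpace_congr (e := B.toSpaceCLE.toEquiv) B.toSpaceCLE.isUniformEmbedding).1 ‹_›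

end CoerciveForm

theorem CoerciveForm.isomorphicToHilbert {E : Type*} [NormedAddCommGroup E] [NormedSpace ℝ E]
    [CompleteSpace E] {C : ℝ} (B : CoerciveForm E C) : IsomorphicToHilbert E :=
  ⟨B.Space, inferInstance, inferInstance, inferInstance, ⟨B.toSpaceCLE⟩⟩

theorem isomorphicToHilbert_of_antilipschitz {X H : Type u} [NormedAddCommGroup X]
    [NormedSpace ℝ X] [CompleteSpace X] [NormedAddCommGroup H] [InnerProductSpace ℝ H]
    [CompleteSpace H] (T : X →L[ℝ] H) {K : NNReal} (hT : AntilipschitzWith K T) :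
    IsomorphicToHilbert X := by
  have hclosed : IsClosed (Set.range T) := hT.isClosed_range T.uniformContinuous
  have : CompleteSpace T.range := hclosed.completeSpace_coe
  exact ⟨T.range, inferInstance, inferInstance, inferInstance,
    ⟨T.equivRange hT.injective hclosed⟩⟩

section Hilbert

variable {X : Type u} [NormedAddCommGroup X] [NormedSpace ℝ X]

theorem HasDominatingForm.isomorphicToHilbert_strongDual {C : ℝ}
    (h : HasDominatingForm (closedBall (0 : X) 1) C) : IsomorphicToHilbert (StrongDual ℝ X) := by
  obtain ⟨B, hB⟩ := h
  refine CoerciveForm.isomorphicToHilbert { B with sq_norm_le f := ?_ }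
  refine (Real.le_sqrt (norm_nonneg f) (B.nonneg f)).1 <|
    f.opNorm_le_of_unit_norm (Real.sqrt_nonneg _) fun x hx => Real.abs_le_sqrt ?_
  exact hB x (mem_closedBall_zero_iff.2 hx.le) f

theorem isomorphicToHilbert_of_strongDual [CompleteSpace X]
    (h : IsomorphicToHilbert (StrongDual ℝ X)) : IsomorphicToHilbert X := by
  obtain ⟨H, _, _, _, ⟨e⟩⟩ := h
  let T : X →L[ℝ] H :=
    rieszAdjoint (e.symm : H →L[ℝ] StrongDual ℝ X) ∘L inclusionInDoubleDual ℝ X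
  set L : StrongDual ℝ X →L[ℝ] H := (e : StrongDual ℝ X →L[ℝ] H)
  refine isomorphicToHilbert_of_antilipschitz T (K := ‖L‖₊)
    (T.antilipschitz_of_bound fun x => ?_)
  refine NormedSpace.norm_le_dual_bound ℝ x (by positivity) fun f => ?_
  calc ‖f x‖ = ‖inner ℝ (T x) (L f)‖ := by simp [T, L, inner_rieszAdjoint_apply]
    _ ≤ ‖T x‖ * ‖L f‖ := norm_inner_le_norm _ _
    _ ≤ ‖T x‖ * (‖L‖ * ‖f‖) := by gcongr; exact L.le_opNorm f
    _ = ‖L‖₊ * ‖T x‖ * ‖f‖ := by push_cast; ring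

end Hilbert

/-- Proposition 3 for F̄: if `X` has property (F̄) and every approximable operator `X → X` factors
through a real Hilbert space, then `X` is isomorphic to a Hilbert space. -/
theorem isomorphicToHilbert_of_property_F (X : Type u) [NormedAddCommGroup X]
    [NormedSpace ℝ X] [CompleteSpace X] (hX : PropertyF X)
    (h : ∀ v : X →L[ℝ] X, ApproxOp v →
      ∃ (H : Type u) (_ : NormedAddCommGroup H) (_ : InnerProductSpace ℝ H)
        (_ : CompleteSpace H) (a : X →L[ℝ] H) (b : H →L[ℝ] X), v = b.comp a) :
    IsomorphicToHilbert X := by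
  have hcompact (K : Set X) (hK : IsCompact K) : ∃ C, HasDominatingForm K C := by
    obtain ⟨v, hv, hKv⟩ := hX K hK
    obtain ⟨H, _, _, _, a, b, rfl⟩ := h v hv
    exact ⟨_, (hasDominatingForm_closure_image_closedBall a b).mono_set hKv⟩
  obtain ⟨C, hC⟩ := exists_forall_finite_hasDominatingForm hcompact
  have hball : HasDominatingForm (closedBall (0 : X) 1) C :=
    hasDominatingForm_of_forall_finite fun s hs hfin => hC s hfin hs
  exact isomorphicToHilbert_of_strongDual hball.isomorphicToHilbert_strongDual
end
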